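/- arXiv:1209.1820 — 15 statements merged into one kernel-verified Lean document; each statement's English description precedes it below -/
import Mathlib

section
/- Let (X,d_X) and (Y,d_Y) be semimetric spaces and suppose d_X is an ultrametric, i.e. d_X(x,y) ≤ max{d_X(x,z), d_X(z,y)} for all x, y, z ∈ X. If there exists a weak similarity Φ : X → Y, then d_Y is also an ultrametric: d_Y(u,v) ≤ max{d_Y(u,w), d_Y(w,v)} for all u, v, w ∈ Y. -/
/-- A semimetric on `X`: nonnegative, symmetric, vanishing exactly on the diagonal. -/
def IsSemimetric {X : Type*} (d : X → X → ℝ) : Prop :=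
  (∀ x y, 0 ≤ d x y) ∧ (∀ x y, d x y = d y x) ∧ ∀ x y, d x y = 0 ↔ x = y

/-- The distance set `D(X)` of a semimetric space `(X, d)`. -/
def distSet {X : Type*} (d : X → X → ℝ) : Set ℝ := {r | ∃ x y, d x y = r}

theorem stmt2 {X Y : Type*} (dX : X → X → ℝ) (dY : Y → Y → ℝ)
    (hX : IsSemimetric dX) (hY : IsSemimetric dY)
    (hultra : ∀ x y z : X, dX x y ≤ max (dX x z) (dX z y))
    (Φ : X → Y) (f : ℝ → ℝ)
    (hsurj : Function.Surjective Φ)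
    (hmono : StrictMonoOn f (distSet dY))
    (hmaps : Set.MapsTo f (distSet dY) (distSet dX))
    (heq : ∀ x y, dX x y = f (dY (Φ x) (Φ y))) :
    ∀ u v w : Y, dY u v ≤ max (dY u w) (dY w v) := by
  intro u v w
  obtain ⟨x, rfl⟩ := hsurj u
  obtain ⟨y, rfl⟩ := hsurj v
  obtain ⟨z, rfl⟩ := hsurj w
  by_contra h
  push_neg at h
  have h1 : dY (Φ x) (Φ z) < dY (Φ x) (Φ y) := lt_of_le_of_lt (le_max_left _ _) h
  have h2 : dY (Φ z) (Φ y) < dY (Φ x) (Φ y) := lt_of_le_of_lt (le_max_right _ _) h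
  have m1 : dY (Φ x) (Φ z) ∈ distSet dY := ⟨_, _, rfl⟩
  have m2 : dY (Φ z) (Φ y) ∈ distSet dY := ⟨_, _, rfl⟩
  have m3 : dY (Φ x) (Φ y) ∈ distSet dY := ⟨_, _, rfl⟩
  have := hultra x y z
  rw [heq x y, heq x z, heq z y] at this
  rcases le_total (f (dY (Φ x) (Φ z))) (f (dY (Φ z) (Φ y))) with hle | hle
  · have := this.trans_eq (max_eq_right hle)
    exact absurd this (not_le_of_gt (hmono m2 m3 h2))
  · have := this.trans_eq (max_eq_left hle)
    exact absurd this (not_le_of_gt (hmono m1 m3 h1))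
end

section
/- Let (X,d_X) and (Y,d_Y) be semimetric spaces and let Φ : X → Y be a bijection. Then Φ is a weak similarity from (X,d_X) to (Y,d_Y) if and only if there exists a semimetric ρ_X on X such that ρ_X and d_X are coincreasing and Φ : (X,ρ_X) → (Y,d_Y) is an isometry (i.e., d_Y(Φ(x),Φ(y)) = ρ_X(x,y) for all x, y ∈ X). -/
theorem stmt3 {X Y : Type*} (dX : X → X → ℝ) (dY : Y → Y → ℝ)
    (hX : IsSemimetric dX) (hY : IsSemimetric dY)
    (Φ : X → Y) (hbij : Function.Bijective Φ) :
    (∃ f : ℝ → ℝ, StrictMonoOn f (distSet dY) ∧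
        Set.MapsTo f (distSet dY) (distSet dX) ∧
        ∀ x y, dX x y = f (dY (Φ x) (Φ y))) ↔
    (∃ ρ : X → X → ℝ, IsSemimetric ρ ∧
        (∀ x y z w, dX x y ≤ dX z w ↔ ρ x y ≤ ρ z w) ∧
        ∀ x y, dY (Φ x) (Φ y) = ρ x y) := by
  constructor
  · rintro ⟨f, hmono, hmaps, hf⟩
    refine ⟨fun x y => dY (Φ x) (Φ y), ⟨fun x y => hY.1 _ _, fun x y => hY.2.1 _ _,
      fun x y => by rw [hY.2.2]; exact ⟨fun h => hbij.1 h, fun h => by rw [h]⟩⟩,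
      fun x y z w => ?_, fun x y => rfl⟩
    rw [hf x y, hf z w]
    exact hmono.le_iff_le ⟨_, _, rfl⟩ ⟨_, _, rfl⟩
  · rintro ⟨ρ, hρ, hco, hρeq⟩
    have heq : ∀ x y z w, ρ x y = ρ z w → dX x y = dX z w := fun x y z w h =>
      le_antisymm ((hco x y z w).mpr h.le) ((hco z w x y).mpr h.ge)
    have hlt : ∀ x y z w, ρ x y < ρ z w → dX x y < dX z w := fun x y z w h =>
      lt_of_not_ge fun hle => absurd ((hco z w x y).mp hle) (not_le.mpr h)
    classical
    set f : ℝ → ℝ := fun r =>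
      if h : ∃ p : X × X, ρ p.1 p.2 = r then dX h.choose.1 h.choose.2 else 0 with hfdef
    have key : ∀ x y, f (ρ x y) = dX x y := by
      intro x y
      have h : ∃ p : X × X, ρ p.1 p.2 = ρ x y := ⟨(x, y), rfl⟩
      simp only [hfdef, dif_pos h]
      exact heq _ _ _ _ h.choose_spec
    have hrep : ∀ r ∈ distSet dY, ∃ x y, ρ x y = r := by
      rintro r ⟨a, b, rfl⟩
      obtain ⟨x, rfl⟩ := hbij.2 a
      obtain ⟨y, rfl⟩ := hbij.2 b
      exact ⟨x, y, (hρeq x y).symm⟩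
    refine ⟨f, ?_, ?_, fun x y => by rw [hρeq, key]⟩
    · intro r hr s hs hlt'
      obtain ⟨x, y, rfl⟩ := hrep r hr
      obtain ⟨z, w, rfl⟩ := hrep s hs
      rw [key, key]
      exact hlt _ _ _ _ hlt'
    · intro r hr
      obtain ⟨x, y, rfl⟩ := hrep r hr
      rw [key]
      exact ⟨x, y, rfl⟩
end

section
/- Let (X,d_X) and (Y,d_Y) be metric spaces and let Φ : X → Y be a weak similarity. If the equivalence (0 ∈ ac(D(X))) ⇔ (0 ∈ ac(D(Y))) holds, then X and Y are homeomorphic (indeed Φ is a homeomorphism). -/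
/-!
As `f` is strictly increasing, both `Φ` and `Φ⁻¹` preserve the strict order of distances:
`d(a, b) < d(a', b')` iff `d(Φ a, Φ b) < d(Φ a', Φ b')`. An order-preserving surjection `g : A → B`
is continuous as soon as small positive distances in `A` force small positive distances in `B`:
given `ε`, pick `0 < d(g a', g b') < ε`, and then `d(a, b) < d(a', b')` implies
`d(g a, g b) < ε`; and if `A` has no small positive distances it is uniformly discrete. The
hypothesis on accumulation points supplies this condition for both `Φ` and `Φ⁻¹`.
-/

open Filter

/-- The distance set `D(X)` of a metric space `X`. -/
def distSetM (X : Type*) [MetricSpace X] : Set ℝ := {r | ∃ x y : X, dist x y = r}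

lemma accPt_zero_distSetM_iff {Z : Type*} [MetricSpace Z] :
    AccPt (0 : ℝ) (𝓟 (distSetM Z)) ↔ ∀ ε > 0, ∃ z w : Z, 0 < dist z w ∧ dist z w < ε := by
  rw [accPt_iff_frequently, Metric.nhds_basis_ball.frequently_iff]
  refine forall₂_congr fun ε _ => ⟨?_, ?_⟩
  · rintro ⟨_, hr, hr0, z, w, rfl⟩
    refine ⟨z, w, dist_nonneg.lt_of_ne' hr0, ?_⟩
    simpa [abs_of_nonneg dist_nonneg] using hr
  · rintro ⟨z, w, hpos, hlt⟩
    exact ⟨dist z w, by simpa [abs_of_nonneg dist_nonneg] using hlt, hpos.ne', z, w, rfl⟩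

theorem continuous_of_dist_lt_imp_dist_lt {A B : Type*} [MetricSpace A] [MetricSpace B]
    {g : A → B} (hsurj : Function.Surjective g)
    (hmono : ∀ a b a' b' : A, dist a b < dist a' b' → dist (g a) (g b) < dist (g a') (g b'))
    (hacc : AccPt (0 : ℝ) (𝓟 (distSetM A)) → AccPt (0 : ℝ) (𝓟 (distSetM B))) :
    Continuous g := by
  rw [Metric.continuous_iff]
  intro b ε hε
  by_cases hA : AccPt (0 : ℝ) (𝓟 (distSetM A))
  · obtain ⟨y, y', hpos, hyε⟩ := accPt_zero_distSetM_iff.mp (hacc hA) ε hε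
    obtain ⟨a', rfl⟩ := hsurj y
    obtain ⟨b', rfl⟩ := hsurj y'
    have hδ : 0 < dist a' b' := dist_pos.mpr fun h => (dist_pos.mp hpos) (congrArg g h)
    exact ⟨dist a' b', hδ, fun a hab => (hmono a b a' b' hab).trans hyε⟩
  · rw [accPt_zero_distSetM_iff] at hA
    push Not at hA
    obtain ⟨δ, hδ, hsep⟩ := hA
    refine ⟨δ, hδ, fun a hab => ?_⟩
    obtain rfl : a = b := by_contra fun hne => (hsep a b (dist_pos.mpr hne)).not_gt hab
    rwa [dist_self]

theorem stmt4_general {X Y : Type*} [MetricSpace X] [MetricSpace Y]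
    (Φ : X → Y) (f : ℝ → ℝ)
    (hsurj : Function.Surjective Φ)
    (hmono : StrictMonoOn f (distSetM Y))
    (heq : ∀ x y : X, dist x y = f (dist (Φ x) (Φ y)))
    (hac : AccPt (0 : ℝ) (𝓟 (distSetM X)) ↔ AccPt (0 : ℝ) (𝓟 (distSetM Y))) :
    ∃ e : X ≃ₜ Y, ⇑e = Φ := by
  have horder : ∀ a b a' b' : X,
      dist (Φ a) (Φ b) < dist (Φ a') (Φ b') ↔ dist a b < dist a' b' := fun a b a' b' => by
    rw [heq, heq]
    exact (hmono.lt_iff_lt ⟨_, _, rfl⟩ ⟨_, _, rfl⟩).symm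
  have hinj : Function.Injective Φ := fun a b h =>
    dist_eq_zero.mp (by rw [heq, h, ← heq, dist_self])
  let e := Equiv.ofBijective Φ ⟨hinj, hsurj⟩
  refine ⟨⟨e, ?_, ?_⟩, rfl⟩
  · exact continuous_of_dist_lt_imp_dist_lt hsurj (fun a b a' b' => (horder a b a' b').mpr) hac.mp
  · have hΦ : ∀ y, Φ (e.symm y) = y := e.apply_symm_apply
    exact continuous_of_dist_lt_imp_dist_lt (g := e.symm) e.symm.surjective
      (fun y z y' z' h => by rwa [← horder, hΦ, hΦ, hΦ, hΦ]) hac.mpr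

theorem stmt4 {X Y : Type*} [MetricSpace X] [MetricSpace Y]
    (Φ : X → Y) (f : ℝ → ℝ)
    (hsurj : Function.Surjective Φ)
    (hmono : StrictMonoOn f (distSetM Y))
    (hmaps : Set.MapsTo f (distSetM Y) (distSetM X))
    (heq : ∀ x y : X, dist x y = f (dist (Φ x) (Φ y)))
    (hac : AccPt (0 : ℝ) (𝓟 (distSetM X)) ↔ AccPt (0 : ℝ) (𝓟 (distSetM Y))) :
    ∃ e : X ≃ₜ Y, ⇑e = Φ :=
  stmt4_general Φ f hsurj hmono heq hac
end

section
/- Let D(X), D(Y) ⊆ ℝ⁺, let f : D(Y) → D(X) be an increasing bijection and let t ∈ D(Y). Then f is continuous at t (as a map between D(Y) and D(X) with their subspace topologies) and f⁻¹ is continuous at f(t) if and only if both of the following equivalences hold: (t ∈ ac([t,∞) ∩ D(Y))) ⇔ (f(t) ∈ ac([f(t),∞) ∩ D(X))), and (t ∈ ac([0,t] ∩ D(Y))) ⇔ (f(t) ∈ ac([0,f(t)] ∩ D(X))). -/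
/-!
For `f` strictly monotone on `s`, right continuity at `a` relative to `s` fails exactly when `a`
is a right accumulation point of `s` but `f a` is not a right accumulation point of `f '' s`:
if some value `f y` lies in `(f a, b)`, then `f < b` on `(a, y) ∩ s`, and if none does, `f` jumps
over `(f a, b)`.
Applying this, and its order dual, to `f` and to `f⁻¹` gives the four implications.
-/

open Filter Topology Set

theorem accPt_Ici_inter_iff {α : Type*} [PartialOrder α] [TopologicalSpace α] {a : α}
    {s : Set α} : AccPt a (𝓟 (Ici a ∩ s)) ↔ (𝓝[Ioi a ∩ s] a).NeBot := by
  rw [accPt_principal_iff_nhdsWithin, ← Ici_sdiff_left, inter_sdiff_right_comm]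

theorem accPt_Iic_inter_iff {α : Type*} [PartialOrder α] [TopologicalSpace α] {a : α}
    {s : Set α} : AccPt a (𝓟 (Iic a ∩ s)) ↔ (𝓝[Iio a ∩ s] a).NeBot := by
  rw [accPt_principal_iff_nhdsWithin, ← Iic_sdiff_right, inter_sdiff_right_comm]

theorem Set.Icc_inter_eq_Iic_inter {α : Type*} [Preorder α] {a b : α} {s : Set α}
    (hs : s ⊆ Ici a) : Icc a b ∩ s = Iic b ∩ s := by
  rw [← Ici_inter_Iic, inter_comm (Ici a), inter_assoc, inter_eq_right.2 hs]

theorem continuousWithinAt_iff_Iio_inter_and_Ioi_inter {α β : Type*} [LinearOrder α]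
    [TopologicalSpace α] [TopologicalSpace β] {f : α → β} {s : Set α} {a : α} :
    ContinuousWithinAt f s a ↔
      ContinuousWithinAt f (Iio a ∩ s) a ∧ ContinuousWithinAt f (Ioi a ∩ s) a := by
  rw [← continuousWithinAt_union, ← union_inter_distrib_right, Iio_union_Ioi,
    ← sdiff_eq_compl_inter, continuousWithinAt_sdiff_self]

section StrictMonoOn

variable {α β : Type*} [LinearOrder α] [TopologicalSpace α] [OrderTopology α]
  [LinearOrder β] [TopologicalSpace β] [OrderTopology β] {f : α → β} {s : Set α} {a : α}

theorem StrictMonoOn.continuousWithinAt_Ioi_inter_iff (hf : StrictMonoOn f s) (ha : a ∈ s) :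
    ContinuousWithinAt f (Ioi a ∩ s) a ↔
      ((𝓝[Ioi a ∩ s] a).NeBot → (𝓝[Ioi (f a) ∩ f '' s] (f a)).NeBot) := by
  have hmaps : ∀ᶠ x in 𝓝[Ioi a ∩ s] a, f x ∈ Ioi (f a) ∩ f '' s :=
    eventually_nhdsWithin_of_forall fun x hx => ⟨hf ha hx.2 hx.1, mem_image_of_mem f hx.2⟩
  refine ⟨fun hc _ => (tendsto_nhdsWithin_iff.2 ⟨hc, hmaps⟩).neBot, fun hacc => ?_⟩
  refine tendsto_order.2 ⟨fun b hb => hmaps.mono fun x hx => hb.trans hx.1, fun b hb => ?_⟩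
  rcases (𝓝[Ioi a ∩ s] a).eq_or_neBot with hbot | hne
  · simp [hbot]
  obtain ⟨_, ⟨hay, y, hy, rfl⟩, hyb⟩ := (hacc hne).nonempty_of_mem
    (inter_mem self_mem_nhdsWithin (nhdsWithin_le_nhds (Iio_mem_nhds hb)))
  filter_upwards [nhdsWithin_le_nhds (Iio_mem_nhds ((hf.lt_iff_lt ha hy).1 hay)),
    self_mem_nhdsWithin] with x hxy hx
  exact ((hf.lt_iff_lt hx.2 hy).2 hxy).trans hyb

theorem StrictMonoOn.continuousWithinAt_Iio_inter_iff (hf : StrictMonoOn f s) (ha : a ∈ s) :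
    ContinuousWithinAt f (Iio a ∩ s) a ↔
      ((𝓝[Iio a ∩ s] a).NeBot → (𝓝[Iio (f a) ∩ f '' s] (f a)).NeBot) :=
  hf.dual.continuousWithinAt_Ioi_inter_iff (α := αᵒᵈ) (β := βᵒᵈ) ha

theorem StrictMonoOn.continuousWithinAt_iff (hf : StrictMonoOn f s) (ha : a ∈ s) :
    ContinuousWithinAt f s a ↔
      ((𝓝[Iio a ∩ s] a).NeBot → (𝓝[Iio (f a) ∩ f '' s] (f a)).NeBot) ∧
      ((𝓝[Ioi a ∩ s] a).NeBot → (𝓝[Ioi (f a) ∩ f '' s] (f a)).NeBot) := by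
  rw [continuousWithinAt_iff_Iio_inter_and_Ioi_inter, hf.continuousWithinAt_Iio_inter_iff ha,
    hf.continuousWithinAt_Ioi_inter_iff ha]

end StrictMonoOn

theorem stmt5 (DX DY : Set ℝ) (hDX : DX ⊆ Set.Ici 0) (hDY : DY ⊆ Set.Ici 0)
    (f g : ℝ → ℝ)
    (hmono : StrictMonoOn f DY) (hbij : Set.BijOn f DY DX)
    (hgf : ∀ t ∈ DY, g (f t) = t) (hfg : ∀ s ∈ DX, f (g s) = s)
    (t : ℝ) (ht : t ∈ DY) :
    (ContinuousWithinAt f DY t ∧ ContinuousWithinAt g DX (f t)) ↔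
      ((AccPt t (𝓟 (Set.Ici t ∩ DY)) ↔ AccPt (f t) (𝓟 (Set.Ici (f t) ∩ DX))) ∧
       (AccPt t (𝓟 (Set.Icc 0 t ∩ DY)) ↔ AccPt (f t) (𝓟 (Set.Icc 0 (f t) ∩ DX)))) := by
  have hg : BijOn g DX DY := hbij.symm ⟨hfg, hgf⟩
  have hgmono : StrictMonoOn g DX := fun x hx y hy hxy =>
    (hmono.lt_iff_lt (hg.mapsTo hx) (hg.mapsTo hy)).1 (by rwa [hfg x hx, hfg y hy])
  rw [hmono.continuousWithinAt_iff ht, hgmono.continuousWithinAt_iff (hbij.mapsTo ht),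
    hgf t ht, hbij.image_eq, hg.image_eq, Icc_inter_eq_Iic_inter hDY,
    Icc_inter_eq_Iic_inter hDX, accPt_Ici_inter_iff, accPt_Ici_inter_iff,
    accPt_Iic_inter_iff, accPt_Iic_inter_iff]
  tauto
end

section
/- Let (X,d_X) and (Y,d_Y) be metric spaces and let Φ : X → Y be a weak similarity. Then Φ is a uniform equivalence (i.e., Φ is bijective, uniformly continuous, and Φ⁻¹ is uniformly continuous) if and only if the equivalence (0 ∈ ac(D(X))) ⇔ (0 ∈ ac(D(Y))) holds. -/
open Filter

lemma distSetM_nonneg {X : Type*} [MetricSpace X] {r : ℝ} (h : r ∈ distSetM X) : 0 ≤ r := by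
  obtain ⟨x, y, rfl⟩ := h; exact dist_nonneg

lemma accPt_distSetM_iff {X : Type*} [MetricSpace X] :
    AccPt (0 : ℝ) (𝓟 (distSetM X)) ↔ ∀ ε > 0, ∃ r, r ∈ distSetM X ∧ 0 < r ∧ r < ε := by
  rw [accPt_iff_nhds]
  constructor
  · intro h ε hε
    obtain ⟨r, ⟨hrU, hrS⟩, hne⟩ := h (Metric.ball 0 ε) (Metric.ball_mem_nhds 0 hε)
    refine ⟨r, hrS, lt_of_le_of_ne (distSetM_nonneg hrS) (Ne.symm hne), ?_⟩
    have := Metric.mem_ball.mp hrU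
    rwa [Real.dist_eq, sub_zero, abs_of_nonneg (distSetM_nonneg hrS)] at this
  · intro h U hU
    obtain ⟨ε, hε, hball⟩ := Metric.mem_nhds_iff.mp hU
    obtain ⟨r, hrS, hr0, hrε⟩ := h ε hε
    refine ⟨r, ⟨hball ?_, hrS⟩, ne_of_gt hr0⟩
    rw [Metric.mem_ball, Real.dist_eq, sub_zero, abs_of_nonneg hr0.le]
    exact hrε

theorem stmt6 {X Y : Type*} [MetricSpace X] [MetricSpace Y]
    (Φ : X → Y) (f : ℝ → ℝ)
    (hsurj : Function.Surjective Φ)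
    (hmono : StrictMonoOn f (distSetM Y))
    (hmaps : Set.MapsTo f (distSetM Y) (distSetM X))
    (heq : ∀ x y : X, dist x y = f (dist (Φ x) (Φ y))) :
    (Function.Bijective Φ ∧ UniformContinuous Φ ∧
      ∃ Ψ : Y → X, (∀ x, Ψ (Φ x) = x) ∧ (∀ y, Φ (Ψ y) = y) ∧ UniformContinuous Ψ) ↔
    (AccPt (0 : ℝ) (𝓟 (distSetM X)) ↔ AccPt (0 : ℝ) (𝓟 (distSetM Y))) := by
  have hinj : Function.Injective Φ := by
    intro a b hab
    have h1 : dist a b = dist b b := by rw [heq a b, hab, heq b b]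
    rw [dist_self] at h1
    exact dist_eq_zero.mp h1
  have hmemX : ∀ x y : X, dist x y ∈ distSetM X := fun x y => ⟨x, y, rfl⟩
  have hmemY : ∀ y y' : Y, dist y y' ∈ distSetM Y := fun y y' => ⟨y, y', rfl⟩
  constructor
  · rintro ⟨-, hΦuc, Ψ, hΨΦ, hΦΨ, hΨuc⟩
    rw [accPt_distSetM_iff, accPt_distSetM_iff]
    constructor
    · intro hX ε hε
      obtain ⟨δ, hδ, hδε⟩ := Metric.uniformContinuous_iff.mp hΦuc ε hε
      obtain ⟨r, ⟨x, y, rfl⟩, hr0, hrδ⟩ := hX δ hδ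
      refine ⟨dist (Φ x) (Φ y), hmemY _ _, ?_, hδε hrδ⟩
      exact dist_pos.mpr fun h => (dist_pos.mp hr0) (hinj h)
    · intro hY ε hε
      obtain ⟨δ, hδ, hδε⟩ := Metric.uniformContinuous_iff.mp hΨuc ε hε
      obtain ⟨r, ⟨y, y', rfl⟩, hr0, hrδ⟩ := hY δ hδ
      refine ⟨dist (Ψ y) (Ψ y'), hmemX _ _, ?_, hδε hrδ⟩
      refine dist_pos.mpr fun h => (dist_pos.mp hr0) ?_
      have := congrArg Φ h
      rwa [hΦΨ, hΦΨ] at this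
  · intro hacc
    have hrinv : ∀ y, Φ (Function.surjInv hsurj y) = y := Function.surjInv_eq hsurj
    have hlinv : ∀ x, Function.surjInv hsurj (Φ x) = x := fun x => hinj (hrinv (Φ x))
    have hΨdist : ∀ y y' : Y,
        dist (Function.surjInv hsurj y) (Function.surjInv hsurj y') = f (dist y y') := by
      intro y y'
      rw [heq, hrinv, hrinv]
    by_cases hY : AccPt (0 : ℝ) (𝓟 (distSetM Y))
    · -- both accumulate at 0
      have hX := hacc.mpr hY
      rw [accPt_distSetM_iff] at hX hY
      -- Y nonempty
      obtain ⟨s₀, hs₀S, hs₀0, -⟩ := hY 1 one_pos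
      obtain ⟨y₀, -, -⟩ := hs₀S
      obtain ⟨x₀, hx₀⟩ := hsurj y₀
      have hf0 : f 0 = 0 := by
        have := heq x₀ x₀
        rwa [dist_self, dist_self, eq_comm] at this
      have h0Y : (0 : ℝ) ∈ distSetM Y := ⟨y₀, y₀, dist_self y₀⟩
      refine ⟨⟨hinj, hsurj⟩, ?_, Function.surjInv hsurj, hlinv, hrinv, ?_⟩
      · rw [Metric.uniformContinuous_iff]
        intro ε hε
        obtain ⟨s, hsS, hs0, hsε⟩ := hY ε hε
        have hfs : 0 < f s := by
          have := hmono h0Y hsS hs0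
          rwa [hf0] at this
        refine ⟨f s, hfs, fun {x y} hxy => ?_⟩
        rw [heq x y] at hxy
        have := (hmono.lt_iff_lt (hmemY (Φ x) (Φ y)) hsS).mp hxy
        exact this.trans hsε
      · rw [Metric.uniformContinuous_iff]
        intro ε hε
        obtain ⟨r, ⟨a, b, hab⟩, hr0, hrε⟩ := hX ε hε
        set s := dist (Φ a) (Φ b) with hs
        have hfs : f s = r := by rw [← hab, heq a b]
        have hs0 : 0 < s := by
          rcases lt_or_eq_of_le (dist_nonneg : (0:ℝ) ≤ s) with h | h
          · exact h
          · exfalso; rw [hs.trans h.symm, hf0] at hfs; exact hr0.ne hfs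
        refine ⟨s, hs0, fun {y y'} hyy' => ?_⟩
        rw [hΨdist]
        calc f (dist y y') < f s := hmono (hmemY y y') (hmemY (Φ a) (Φ b)) hyy'
          _ = r := hfs
          _ < ε := hrε
    · -- neither accumulates at 0
      have hX : ¬ AccPt (0 : ℝ) (𝓟 (distSetM X)) := fun h => hY (hacc.mp h)
      rw [accPt_distSetM_iff] at hX hY
      push_neg at hX hY
      obtain ⟨εX, hεX, hXgap⟩ := hX
      obtain ⟨εY, hεY, hYgap⟩ := hY
      refine ⟨⟨hinj, hsurj⟩, ?_, Function.surjInv hsurj, hlinv, hrinv, ?_⟩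
      · rw [Metric.uniformContinuous_iff]
        intro ε hε
        refine ⟨εX, hεX, fun {x y} hxy => ?_⟩
        have hxy0 : dist x y = 0 := by
          by_contra h
          have hpos : 0 < dist x y := lt_of_le_of_ne dist_nonneg (Ne.symm h)
          exact absurd hxy (not_lt.mpr (hXgap _ (hmemX x y) hpos))
        have : x = y := dist_eq_zero.mp hxy0
        rw [this, dist_self]; exact hε
      · rw [Metric.uniformContinuous_iff]
        intro ε hε
        refine ⟨εY, hεY, fun {y y'} hyy' => ?_⟩
        have hyy0 : dist y y' = 0 := by
          by_contra h
          have hpos : 0 < dist y y' := lt_of_le_of_ne dist_nonneg (Ne.symm h)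
          exact absurd hyy' (not_lt.mpr (hYgap _ (hmemY y y') hpos))
        have : y = y' := dist_eq_zero.mp hyy0
        rw [this, dist_self]; exact hε
end

section
/- Let (X,d_X) be a compact ultrametric space, let (Y,d_Y) be a semimetric space, and suppose there is a weak similarity Φ : X → Y and D(X) = D(Y). Then X and Y are isometric, i.e., there exists a bijection F : X → Y with d_Y(F(x),F(y)) = d_X(x,y) for all x, y ∈ X. -/
theorem stmt7 {X : Type*} [MetricSpace X] [CompactSpace X]
    (hultra : ∀ x y z : X, dist x y ≤ max (dist x z) (dist z y))
    {Y : Type*} (dY : Y → Y → ℝ) (hY : IsSemimetric dY)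
    (Φ : X → Y) (f : ℝ → ℝ)
    (hsurj : Function.Surjective Φ)
    (hmono : StrictMonoOn f (distSet dY))
    (hmaps : Set.MapsTo f (distSet dY) (distSetM X))
    (heq : ∀ x y : X, dist x y = f (dY (Φ x) (Φ y)))
    (hD : distSetM X = distSet dY) :
    ∃ F : X → Y, Function.Bijective F ∧ ∀ x y : X, dY (F x) (F y) = dist x y := by
  obtain ⟨hY0, hYsym, hYeq⟩ := hY
  -- Finiteness of the set of distances ≥ ε in the compact ultrametric space X.
  have hfin : ∀ ε : ℝ, 0 < ε → {r | r ∈ distSetM X ∧ ε ≤ r}.Finite := by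
    intro ε hε
    obtain ⟨t, ht⟩ := IsCompact.elim_finite_subcover (isCompact_univ (X := X))
      (fun c : X => Metric.ball c ε) (fun c => Metric.isOpen_ball)
      (fun x _ => Set.mem_iUnion.2 ⟨x, Metric.mem_ball_self hε⟩)
    have key : ∀ a b c : X, dist a c < ε → ε ≤ dist a b → dist c b = dist a b := by
      intro a b c hac hab
      have h1 : dist c b ≤ dist a b := by
        have h := hultra c b a
        have hca : dist c a ≤ dist a b := le_trans (le_of_lt (by rwa [dist_comm])) hab
        exact le_trans h (max_le hca le_rfl)
      have h2 : dist a b ≤ dist c b := by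
        rcases le_max_iff.1 (hultra a b c) with h | h
        · linarith
        · exact h
      linarith
    apply Set.Finite.subset (((t.finite_toSet).prod (t.finite_toSet)).image
      (fun p : X × X => dist p.1 p.2))
    rintro r ⟨⟨x, y, rfl⟩, hr⟩
    obtain ⟨cx, hcx, hxcx⟩ := Set.mem_iUnion₂.1 (ht (Set.mem_univ x))
    obtain ⟨cy, hcy, hycy⟩ := Set.mem_iUnion₂.1 (ht (Set.mem_univ y))
    have h1 : dist cx y = dist x y := key x y cx (Metric.mem_ball.1 hxcx) hr
    have h2 : dist cy cx = dist y cx :=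
      key y cx cy (Metric.mem_ball.1 hycy) (by rw [dist_comm y cx, h1]; exact hr)
    refine ⟨(cx, cy), ⟨hcx, hcy⟩, ?_⟩
    calc dist cx cy = dist cy cx := dist_comm _ _
      _ = dist y cx := h2
      _ = dist cx y := dist_comm _ _
      _ = dist x y := h1
  -- The key pointwise identity.
  have main : ∀ x y : X, dY (Φ x) (Φ y) = dist x y := by
    intro x y
    have hf0 : f 0 = 0 := by
      have h := heq x x
      rw [dist_self, (hYeq (Φ x) (Φ x)).mpr rfl] at h
      exact h.symm
    have hfinD : ∀ ε : ℝ, 0 < ε → {r | r ∈ distSet dY ∧ ε ≤ r}.Finite := by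
      intro ε hε
      have := hfin ε hε
      rwa [hD] at this
    have hmem : ∀ u ∈ distSet dY, f u ∈ distSet dY := by
      intro u hu
      have := hmaps hu
      rwa [hD] at this
    -- Stage 1: f is dominated by the identity on the distance set.
    have c1 : ∀ s ∈ distSet dY, f s ≤ s := by
      intro s hs
      have hs0 : 0 ≤ s := by obtain ⟨a, b, rfl⟩ := hs; exact hY0 a b
      rcases eq_or_lt_of_le hs0 with h0 | hpos
      · rw [← h0, hf0]
      by_contra hlt
      push_neg at hlt
      set A := (hfinD s hpos).toFinset with hA
      have hAmem : ∀ u, u ∈ A ↔ u ∈ distSet dY ∧ s ≤ u := by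
        intro u; simp [hA]
      have hsA : s ∈ A := (hAmem s).2 ⟨hs, le_rfl⟩
      have hinj : Set.InjOn f ↑A :=
        hmono.injOn.mono (fun u hu => ((hAmem u).1 hu).1)
      have himg : A.image f ⊆ A.erase s := by
        intro u hu
        obtain ⟨v, hv, rfl⟩ := Finset.mem_image.1 hu
        obtain ⟨hvD, hsv⟩ := (hAmem v).1 hv
        have hfsv : f s ≤ f v := (hmono.le_iff_le hs hvD).2 hsv
        have hsfv : s < f v := lt_of_lt_of_le hlt hfsv
        exact Finset.mem_erase.2 ⟨ne_of_gt hsfv, (hAmem _).2 ⟨hmem v hvD, le_of_lt hsfv⟩⟩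
      have hc : A.card = (A.image f).card := (Finset.card_image_of_injOn hinj).symm
      have hle : (A.image f).card ≤ (A.erase s).card := Finset.card_le_card himg
      have hers : (A.erase s).card = A.card - 1 := Finset.card_erase_of_mem hsA
      have hpos' : 0 < A.card := Finset.card_pos.2 ⟨s, hsA⟩
      omega
    -- Stage 2: f is the identity on the distance set.
    have c2 : ∀ r ∈ distSet dY, f r = r := by
      intro r hr
      have hr0 : 0 ≤ r := by obtain ⟨a, b, rfl⟩ := hr; exact hY0 a b
      rcases eq_or_lt_of_le hr0 with h0 | hpos
      · rw [← h0, hf0]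
      set A := (hfinD r hpos).toFinset with hA
      have hAmem : ∀ u, u ∈ A ↔ u ∈ distSet dY ∧ r ≤ u := by
        intro u; simp [hA]
      have hrA : r ∈ A := (hAmem r).2 ⟨hr, le_rfl⟩
      have hinj : Set.InjOn f ↑A :=
        hmono.injOn.mono (fun u hu => ((hAmem u).1 hu).1)
      have hsub : A ⊆ A.image f := by
        intro a ha
        obtain ⟨haD, hra⟩ := (hAmem a).1 ha
        obtain ⟨u, hu, hfu⟩ : ∃ u ∈ distSet dY, f u = a := by
          have haX : a ∈ distSetM X := by rwa [hD]
          obtain ⟨p, q, hpq⟩ := haX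
          exact ⟨dY (Φ p) (Φ q), ⟨_, _, rfl⟩, by rw [← heq p q, hpq]⟩
        have hau : a ≤ u := hfu ▸ c1 u hu
        exact Finset.mem_image.2 ⟨u, (hAmem u).2 ⟨hu, le_trans hra hau⟩, hfu⟩
      have heqA : A.image f = A := (Finset.eq_of_subset_of_card_le hsub Finset.card_image_le).symm
      have hsum : ∑ a ∈ A, f a = ∑ a ∈ A, a := by
        conv_rhs => rw [← heqA]
        exact (Finset.sum_image (g := f) (f := id) (fun p hp q hq hpq => hinj hp hq hpq)).symm
      have hall := (Finset.sum_eq_sum_iff_of_le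
        (fun i hi => c1 i ((hAmem i).1 hi).1)).1 hsum
      exact hall r hrA
    have h := heq x y
    rw [c2 _ ⟨Φ x, Φ y, rfl⟩] at h
    exact h.symm
  refine ⟨Φ, ⟨?_, hsurj⟩, main⟩
  intro a b hab
  have h0 : dY (Φ a) (Φ b) = 0 := (hYeq _ _).mpr (by rw [hab])
  have h := main a b
  rw [h0] at h
  exact (dist_eq_zero.1 h.symm)
end

section
/- Let (X,d_X) and (Y,d_Y) be semimetric spaces with D(X) = D(Y) = D. If D is rigid and Φ : X → Y is a weak similarity (with any scaling function f), then Φ is an isometry: d_Y(Φ(x),Φ(y)) = d_X(x,y) for all x, y ∈ X. -/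
/-- A set `D ⊆ ℝ` is rigid if the only strictly increasing bijection of `D` onto
itself is the identity. -/
def IsRigid (D : Set ℝ) : Prop :=
  ∀ g : ℝ → ℝ, StrictMonoOn g D → Set.BijOn g D D → ∀ t ∈ D, g t = t

theorem stmt10 {X Y : Type*} (dX : X → X → ℝ) (dY : Y → Y → ℝ)
    (hX : IsSemimetric dX) (hY : IsSemimetric dY)
    (D : Set ℝ) (hDX : distSet dX = D) (hDY : distSet dY = D)
    (hrigid : IsRigid D)
    (Φ : X → Y) (f : ℝ → ℝ)
    (hsurj : Function.Surjective Φ)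
    (hmono : StrictMonoOn f (distSet dY))
    (hmaps : Set.MapsTo f (distSet dY) (distSet dX))
    (heq : ∀ x y, dX x y = f (dY (Φ x) (Φ y))) :
    ∀ x y, dY (Φ x) (Φ y) = dX x y := by
  have hmono' : StrictMonoOn f D := hDY ▸ hmono
  have hmaps' : Set.MapsTo f D D := by rw [hDY, hDX] at hmaps; exact hmaps
  have hsurjOn : Set.SurjOn f D D := by
    intro r hr
    rw [← hDX] at hr
    obtain ⟨x, y, hxy⟩ := hr
    exact ⟨dY (Φ x) (Φ y), by rw [← hDY]; exact ⟨Φ x, Φ y, rfl⟩, by rw [← hxy, heq]⟩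
  have hbij : Set.BijOn f D D := ⟨hmaps', hmono'.injOn, hsurjOn⟩
  have hid := hrigid f hmono' hbij
  intro x y
  have ht : dY (Φ x) (Φ y) ∈ D := by rw [← hDY]; exact ⟨Φ x, Φ y, rfl⟩
  rw [heq x y, hid _ ht]
end

section
/- Let (X,d) be a nonempty compact ultrametric space and let D = D(X) be its distance set. Then D, with the order induced from ℝ, is a converse well-ordered set: every nonempty subset of D has a greatest element. -/
/-- Isosceles lemma for ultrametric spaces. -/
lemma ultra_iso {X : Type*} [MetricSpace X]
    (hultra : ∀ x y z : X, dist x y ≤ max (dist x z) (dist z y))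
    {x y u v : X} (hu : dist u x < dist x y) (hv : dist v y < dist x y) :
    dist u v = dist x y := by
  have h1 : dist u v ≤ dist x y := by
    have := hultra u v x
    have h2 : dist x v ≤ max (dist x y) (dist y v) := hultra x v y
    have h3 : dist y v < dist x y := by rwa [dist_comm]
    have h4 : dist x v ≤ dist x y := h2.trans (by simp [h3.le])
    calc dist u v ≤ max (dist u x) (dist x v) := hultra u v x
      _ ≤ dist x y := max_le hu.le h4
  have h5 : dist x y ≤ dist u v := by
    have hxu : dist x u < dist x y := by rwa [dist_comm]
    have h6 : dist x y ≤ max (dist x u) (dist u y) := hultra x y u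
    have h7 : dist x y ≤ dist u y := by
      rcases le_max_iff.mp h6 with h | h
      · linarith
      · exact h
    have h8 : dist u y ≤ max (dist u v) (dist v y) := hultra u y v
    rcases le_max_iff.mp (h7.trans h8) with h | h
    · exact h
    · linarith
  linarith

theorem stmt11 {X : Type*} [MetricSpace X] [CompactSpace X] [Nonempty X]
    (hultra : ∀ x y z : X, dist x y ≤ max (dist x z) (dist z y)) :
    ∀ S ⊆ distSetM X, S.Nonempty → ∃ m ∈ S, ∀ s ∈ S, s ≤ m := by
  intro S hSD hSne
  -- D is compact, hence S is bounded above
  have hDeq : distSetM X = Set.range (fun p : X × X => dist p.1 p.2) := by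
    ext r
    constructor
    · rintro ⟨x, y, h⟩; exact ⟨(x, y), h⟩
    · rintro ⟨⟨x, y⟩, h⟩; exact ⟨x, y, h⟩
  have hDcomp : IsCompact (distSetM X) := by
    rw [hDeq]
    exact isCompact_range continuous_dist
  have hSbdd : BddAbove S := (hDcomp.bddAbove).mono hSD
  set a := sSup S with ha
  have hle : ∀ s ∈ S, s ≤ a := fun s hs => le_csSup hSbdd hs
  -- it suffices to show a ∈ S
  by_cases haS : a ∈ S
  · exact ⟨a, haS, hle⟩
  exfalso
  -- a > 0
  have hapos : 0 < a := by
    obtain ⟨s0, hs0⟩ := hSne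
    obtain ⟨x, y, hxy⟩ := hSD hs0
    have h0 : 0 ≤ s0 := hxy ▸ dist_nonneg
    rcases lt_or_eq_of_le (h0.trans (hle s0 hs0)) with h | h
    · exact h
    · have hs0a : s0 = a := le_antisymm (hle s0 hs0) (h ▸ h0)
      exact absurd (hs0a ▸ hs0) haS
  -- choose approximating pairs
  have hex : ∀ n : ℕ, ∃ p : X × X, dist p.1 p.2 ∈ S ∧ a - 1/(n+1) < dist p.1 p.2 := by
    intro n
    have hlt : a - 1/(n+1) < a := by
      have : (0:ℝ) < 1/(n+1) := by positivity
      linarith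
    obtain ⟨s, hsS, hs⟩ := exists_lt_of_lt_csSup hSne hlt
    obtain ⟨x, y, hxy⟩ := hSD hsS
    exact ⟨(x, y), hxy ▸ hsS, hxy ▸ hs⟩
  choose f hf1 hf2 using hex
  -- extract convergent subsequence
  obtain ⟨p, -, φ, hφ, hconv⟩ :=
    isCompact_univ.tendsto_subseq (x := f) (fun n => Set.mem_univ _)
  have hφtop : Filter.Tendsto φ Filter.atTop Filter.atTop := hφ.tendsto_atTop
  -- distances along subsequence tend to a
  have hlow : Filter.Tendsto (fun n : ℕ => a - 1/(n+1)) Filter.atTop (nhds a) := by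
    have h1 : Filter.Tendsto (fun n : ℕ => 1/((n:ℝ)+1)) Filter.atTop (nhds 0) :=
      tendsto_one_div_add_atTop_nhds_zero_nat
    have := h1.const_sub a
    simpa using this
  have hdistS : Filter.Tendsto (fun n => dist (f (φ n)).1 (f (φ n)).2) Filter.atTop (nhds a) := by
    apply tendsto_of_tendsto_of_tendsto_of_le_of_le (hlow.comp hφtop) tendsto_const_nhds
    · intro n; exact (hf2 (φ n)).le
    · intro n; exact hle _ (hf1 (φ n))
  -- distances also tend to dist p.1 p.2
  have h1 : Filter.Tendsto (fun n => (f (φ n)).1) Filter.atTop (nhds p.1) :=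
    (continuous_fst.tendsto p).comp hconv
  have h2 : Filter.Tendsto (fun n => (f (φ n)).2) Filter.atTop (nhds p.2) :=
    (continuous_snd.tendsto p).comp hconv
  have hdistP : Filter.Tendsto (fun n => dist (f (φ n)).1 (f (φ n)).2) Filter.atTop
      (nhds (dist p.1 p.2)) := h1.dist h2
  have hpa : dist p.1 p.2 = a := tendsto_nhds_unique hdistP hdistS
  -- pick n with both components close
  have he1 : ∀ᶠ n in Filter.atTop, dist (f (φ n)).1 p.1 < a :=
    (Metric.tendsto_nhds.mp h1) a hapos
  have he2 : ∀ᶠ n in Filter.atTop, dist (f (φ n)).2 p.2 < a :=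
    (Metric.tendsto_nhds.mp h2) a hapos
  obtain ⟨n, hn1, hn2⟩ := (he1.and he2).exists
  rw [← hpa] at hn1 hn2
  have hiso : dist (f (φ n)).1 (f (φ n)).2 = dist p.1 p.2 :=
    ultra_iso hultra hn1 hn2
  have hmem := hf1 (φ n)
  rw [hiso, hpa] at hmem
  exact haS hmem
end

section
/- Let (X,d) be a compact ultrametric space and let Φ : X → X be a weak similarity from (X,d) to itself. Then Φ is an isometry: d(Φ(x),Φ(y)) = d(x,y) for all x, y ∈ X. -/
open Set Metric

namespace IsUltrametricDist

variable {X : Type*} [PseudoMetricSpace X] [IsUltrametricDist X]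

lemma dist_eq_of_dist_lt_dist {x x' y : X} (h : dist x x' < dist x y) :
    dist x' y = dist x y := by
  rw [dist_eq_max_of_dist_ne_dist x' x y (by rw [dist_comm]; exact h.ne),
    dist_comm x' x, max_eq_right h.le]

lemma dist_eq_of_dist_lt_of_dist_lt {x y x' y' : X} {ε : ℝ} (hx : dist x x' < ε)
    (hy : dist y y' < ε) (hε : ε ≤ dist x y) : dist x' y' = dist x y := by
  have hx' : dist x' y = dist x y := dist_eq_of_dist_lt_dist (hx.trans_le hε)
  have hy' : dist y y' < dist y x' := by rw [dist_comm y x', hx']; exact hy.trans_le hε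
  rw [dist_comm, dist_eq_of_dist_lt_dist hy', dist_comm, hx']

end IsUltrametricDist

open IsUltrametricDist in
theorem finite_distSetM_inter_Ici {X : Type*} [MetricSpace X] [IsUltrametricDist X]
    [CompactSpace X] {ε : ℝ} (hε : 0 < ε) : (distSetM X ∩ Ici ε).Finite := by
  obtain ⟨t, -, ht, hcover⟩ := finite_cover_balls_of_compact (isCompact_univ (X := X)) hε
  refine ((ht.prod ht).image fun p : X × X => dist p.1 p.2).subset ?_
  rintro _ ⟨⟨x, y, rfl⟩, hxy⟩
  obtain ⟨x', hx', hxx'⟩ := mem_iUnion₂.1 (hcover (mem_univ x))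
  obtain ⟨y', hy', hyy'⟩ := mem_iUnion₂.1 (hcover (mem_univ y))
  exact ⟨(x', y'), ⟨hx', hy'⟩,
    dist_eq_of_dist_lt_of_dist_lt (mem_ball.1 hxx') (mem_ball.1 hyy') hxy⟩

section

variable {α : Type*} [LinearOrder α] {D : Set α} {f : α → α}

lemma eq_of_le_of_ncard_inter_Ici_le {a b : α} (hab : a ≤ b) (ha : a ∈ D)
    (hfin : (D ∩ Ici a).Finite) (hcard : (D ∩ Ici a).ncard ≤ (D ∩ Ici b).ncard) : a = b := by
  have hsub : D ∩ Ici b ⊆ D ∩ Ici a := inter_subset_inter_right D (Ici_subset_Ici.2 hab)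
  have heq := eq_of_subset_of_ncard_le hsub hcard hfin
  exact hab.antisymm (heq ▸ ⟨ha, le_rfl⟩ : a ∈ D ∩ Ici b).2

lemma StrictMonoOn.image_inter_Ici (hmono : StrictMonoOn f D) (hmaps : MapsTo f D D)
    (hsurj : SurjOn f D D) {s : α} (hs : s ∈ D) : f '' (D ∩ Ici s) = D ∩ Ici (f s) := by
  ext c
  constructor
  · rintro ⟨u, ⟨hu, hsu⟩, rfl⟩
    exact ⟨hmaps hu, hmono.monotoneOn hs hu hsu⟩
  · rintro ⟨hc, hfsc⟩
    obtain ⟨u, hu, rfl⟩ := hsurj hc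
    exact ⟨u, ⟨hu, (hmono.le_iff_le hs hu).1 hfsc⟩, rfl⟩

lemma StrictMonoOn.eq_self_of_finite_inter_Ici (hmono : StrictMonoOn f D)
    (hmaps : MapsTo f D D) (hsurj : SurjOn f D D) {s : α} (hs : s ∈ D)
    (hfin : (D ∩ Ici s).Finite) : f s = s := by
  have himage := hmono.image_inter_Ici hmaps hsurj hs
  have hcard : (D ∩ Ici (f s)).ncard = (D ∩ Ici s).ncard := by
    rw [← himage, (hmono.injOn.mono inter_subset_left).ncard_image]
  have hfin' : (D ∩ Ici (f s)).Finite := himage ▸ hfin.image f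
  rcases le_total s (f s) with h | h
  · exact (eq_of_le_of_ncard_inter_Ici_le h hs hfin hcard.ge).symm
  · exact eq_of_le_of_ncard_inter_Ici_le h (hmaps hs) hfin' hcard.le

end

theorem stmt12_general {X : Type*} [MetricSpace X] [CompactSpace X]
    (hultra : ∀ x y z : X, dist x y ≤ max (dist x z) (dist z y))
    (Φ : X → X) (f : ℝ → ℝ)
    (hmono : StrictMonoOn f (distSetM X))
    (hmaps : Set.MapsTo f (distSetM X) (distSetM X))
    (heq : ∀ x y : X, dist x y = f (dist (Φ x) (Φ y))) :
    ∀ x y : X, dist (Φ x) (Φ y) = dist x y := by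
  have : IsUltrametricDist X := ⟨fun x y z => hultra x z y⟩
  have hsurjOn : SurjOn f (distSetM X) (distSetM X) := by
    rintro _ ⟨x, y, rfl⟩
    exact ⟨_, ⟨Φ x, Φ y, rfl⟩, (heq x y).symm⟩
  intro x y
  rw [heq x y]
  rcases (dist_nonneg (x := Φ x) (y := Φ y)).eq_or_lt with h | h
  · rw [← h]
    simpa using heq x x
  · exact (hmono.eq_self_of_finite_inter_Ici hmaps hsurjOn ⟨_, _, rfl⟩
      (finite_distSetM_inter_Ici h)).symm

theorem stmt12 {X : Type*} [MetricSpace X] [CompactSpace X]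
    (hultra : ∀ x y z : X, dist x y ≤ max (dist x z) (dist z y))
    (Φ : X → X) (f : ℝ → ℝ)
    (hsurj : Function.Surjective Φ)
    (hmono : StrictMonoOn f (distSetM X))
    (hmaps : Set.MapsTo f (distSetM X) (distSetM X))
    (heq : ∀ x y : X, dist x y = f (dist (Φ x) (Φ y))) :
    ∀ x y : X, dist (Φ x) (Φ y) = dist x y :=
  stmt12_general hultra Φ f hmono hmaps heq
end

section
/- Let (X,d_X) and (Y,d_Y) be semimetric spaces and let Φ₁ : X → Y and Φ₂ : X → Y be weak similarities. If D(X) is rigid, then there exist an isometry F : X → X (a bijection with d_X(F(x),F(y)) = d_X(x,y) for all x,y) and an isometry Ψ : Y → Y (a bijection with d_Y(Ψ(u),Ψ(v)) = d_Y(u,v) for all u,v) such that Φ₂ = Φ₁∘F and Φ₂ = Ψ∘Φ₁. -/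
theorem stmt13 {X Y : Type*} (dX : X → X → ℝ) (dY : Y → Y → ℝ)
    (hX : IsSemimetric dX) (hY : IsSemimetric dY)
    (hrigid : IsRigid (distSet dX))
    (Φ₁ Φ₂ : X → Y) (f₁ f₂ : ℝ → ℝ)
    (hsurj₁ : Function.Surjective Φ₁)
    (hmono₁ : StrictMonoOn f₁ (distSet dY))
    (hmaps₁ : Set.MapsTo f₁ (distSet dY) (distSet dX))
    (heq₁ : ∀ x y, dX x y = f₁ (dY (Φ₁ x) (Φ₁ y)))
    (hsurj₂ : Function.Surjective Φ₂)
    (hmono₂ : StrictMonoOn f₂ (distSet dY))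
    (hmaps₂ : Set.MapsTo f₂ (distSet dY) (distSet dX))
    (heq₂ : ∀ x y, dX x y = f₂ (dY (Φ₂ x) (Φ₂ y))) :
    ∃ (F : X → X) (Ψ : Y → Y),
      Function.Bijective F ∧ (∀ x y, dX (F x) (F y) = dX x y) ∧
      Function.Bijective Ψ ∧ (∀ u v, dY (Ψ u) (Ψ v) = dY u v) ∧
      Φ₂ = Φ₁ ∘ F ∧ Φ₂ = Ψ ∘ Φ₁ := by
  classical
  obtain ⟨hpos, hsym, hzero⟩ := hX
  obtain ⟨hpos', hsym', hzero'⟩ := hY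
  have hmemY : ∀ u v : Y, dY u v ∈ distSet dY := fun u v => ⟨u, v, rfl⟩
  have hmemX : ∀ x y : X, dX x y ∈ distSet dX := fun x y => ⟨x, y, rfl⟩
  -- injectivity of Φ₁ and Φ₂
  have hinj₁ : Function.Injective Φ₁ := by
    intro x y h
    have h1 : dX x y = f₁ (dY (Φ₁ x) (Φ₁ x)) := by rw [heq₁ x y, h]
    have h2 : dX x x = f₁ (dY (Φ₁ x) (Φ₁ x)) := heq₁ x x
    have : dX x y = 0 := by rw [h1, ← h2, (hzero x x).mpr rfl]
    exact (hzero x y).mp this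
  have hinj₂ : Function.Injective Φ₂ := by
    intro x y h
    have h1 : dX x y = f₂ (dY (Φ₂ x) (Φ₂ x)) := by rw [heq₂ x y, h]
    have h2 : dX x x = f₂ (dY (Φ₂ x) (Φ₂ x)) := heq₂ x x
    have : dX x y = 0 := by rw [h1, ← h2, (hzero x x).mpr rfl]
    exact (hzero x y).mp this
  -- f₂ maps D(Y) onto D(X)
  have hsurjf₂ : ∀ t ∈ distSet dX, ∃ s, s ∈ distSet dY ∧ f₂ s = t := by
    rintro t ⟨x, y, rfl⟩
    exact ⟨dY (Φ₂ x) (Φ₂ y), hmemY _ _, (heq₂ x y).symm⟩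
  choose! inv hmem hval using hsurjf₂
  set g : ℝ → ℝ := fun t => if t ∈ distSet dX then f₁ (inv t) else t with hg
  have hgval : ∀ t ∈ distSet dX, g t = f₁ (inv t) := by
    intro t ht; simp [hg, ht]
  have hgmono : StrictMonoOn g (distSet dX) := by
    intro s hs t ht hlt
    rw [hgval s hs, hgval t ht]
    apply hmono₁ (hmem s hs) (hmem t ht)
    have : f₂ (inv s) < f₂ (inv t) := by rw [hval s hs, hval t ht]; exact hlt
    exact (hmono₂.lt_iff_lt (hmem s hs) (hmem t ht)).mp this
  have hgbij : Set.BijOn g (distSet dX) (distSet dX) := by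
    refine ⟨fun t ht => by rw [hgval t ht]; exact hmaps₁ (hmem t ht), hgmono.injOn, ?_⟩
    rintro r ⟨x, y, rfl⟩
    refine ⟨f₂ (dY (Φ₁ x) (Φ₁ y)), hmaps₂ (hmemY _ _), ?_⟩
    have htX : f₂ (dY (Φ₁ x) (Φ₁ y)) ∈ distSet dX := hmaps₂ (hmemY _ _)
    rw [hgval _ htX]
    have : inv (f₂ (dY (Φ₁ x) (Φ₁ y))) = dY (Φ₁ x) (Φ₁ y) :=
      hmono₂.injOn (hmem _ htX) (hmemY _ _) (hval _ htX)
    rw [this, ← heq₁]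
  -- key: f₁ = f₂ on D(Y)
  have key : ∀ s ∈ distSet dY, f₁ s = f₂ s := by
    intro s hs
    have htX : f₂ s ∈ distSet dX := hmaps₂ hs
    have h := hrigid g hgmono hgbij (f₂ s) htX
    rw [hgval _ htX] at h
    have : inv (f₂ s) = s := hmono₂.injOn (hmem _ htX) hs (hval _ htX)
    rwa [this] at h
  -- build the equivalence from Φ₁
  let e₁ : X ≃ Y := Equiv.ofBijective Φ₁ ⟨hinj₁, hsurj₁⟩
  refine ⟨fun x => e₁.symm (Φ₂ x), fun u => Φ₂ (e₁.symm u), ?_, ?_, ?_, ?_, ?_, ?_⟩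
  · exact (e₁.symm.bijective).comp ⟨hinj₂, hsurj₂⟩
  · intro x y
    have h1 : Φ₁ (e₁.symm (Φ₂ x)) = Φ₂ x := e₁.apply_symm_apply (Φ₂ x)
    have h2 : Φ₁ (e₁.symm (Φ₂ y)) = Φ₂ y := e₁.apply_symm_apply (Φ₂ y)
    rw [heq₁ (e₁.symm (Φ₂ x)) (e₁.symm (Φ₂ y)), h1, h2, key _ (hmemY _ _), ← heq₂]
  · exact ⟨hinj₂.comp e₁.symm.injective, hsurj₂.comp e₁.symm.surjective⟩
  · intro u v
    set a := e₁.symm u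
    set b := e₁.symm v
    have hu : Φ₁ a = u := e₁.apply_symm_apply u
    have hv : Φ₁ b = v := e₁.apply_symm_apply v
    have h1 : f₂ (dY (Φ₂ a) (Φ₂ b)) = f₂ (dY u v) := by
      rw [← heq₂, ← key _ (hmemY u v), ← hu, ← hv, ← heq₁]
    exact hmono₂.injOn (hmemY _ _) (hmemY _ _) h1
  · funext x; exact (e₁.apply_symm_apply (Φ₂ x)).symm
  · funext x
    simp only [Function.comp_apply]
    have : e₁.symm (Φ₁ x) = x := e₁.symm_apply_apply x
    rw [this]
end

section
/- Let D₁, D₂ ⊆ ℝ⁺ be sets with 0 ∈ D₁ ∩ D₂. The following statements are equivalent: (i) there exist sets A₁, A₂, A₃ ⊆ ℝ⁺ with A₂ ≠ ∅ such that both D₁ and D₂ (with the order induced from ℝ) are order-isomorphic to the ordered sum A₁ + A₂·tp(ℤ) + A₃, i.e., to the lexicographic sum A₁ ⊕ (ℤ ×_lex A₂) ⊕ A₃ where the middle summand consists of ℤ-many consecutive copies of A₂; (ii) there exist ultrametric spaces (X,d_X), (Y,d_Y) with D(X) = D₁ and D(Y) = D₂ and weak similarities Φ₁ : X → Y and Φ₂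 : X → Y such that Φ₁⁻¹∘Φ₂ is not an isometry of X; (iii) there exist semimetric spaces (X,d_X), (Y,d_Y) with D(X) = D₁ and D(Y) = D₂ and weak similarities Φ₁ : X → Y and Φ₂ : X → Y such that Φ₁⁻¹∘Φ₂ is not an isometry of X. -/
/-- An ultrametric (as a semimetric satisfying the strong triangle inequality;
this makes it a metric). -/
def IsUltrametric {X : Type*} (d : X → X → ℝ) : Prop :=
  IsSemimetric d ∧ ∀ x y z, d x y ≤ max (d x z) (d z y)

/-- `Φ : X → Y` is a weak similarity from `(X, dX)` to `(Y, dY)`. -/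
def IsWeakSimilarity {X Y : Type*} (dX : X → X → ℝ) (dY : Y → Y → ℝ) (Φ : X → Y) : Prop :=
  Function.Surjective Φ ∧ ∃ f : ℝ → ℝ, StrictMonoOn f (distSet dY) ∧
    Set.MapsTo f (distSet dY) (distSet dX) ∧ ∀ x y, dX x y = f (dY (Φ x) (Φ y))

/-- `D` is order isomorphic to the ordered sum `A₁ + A₂ · tp(ℤ) + A₃`. -/
def IsZSumType (D A₁ A₂ A₃ : Set ℝ) : Prop :=
  Nonempty (↥D ≃o (↥A₁ ⊕ₗ ((ℤ ×ₗ ↥A₂) ⊕ₗ ↥A₃)))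

/-!
Weak similarities `Φ₁, Φ₂ : X → Y` induce order isomorphisms `e₁, e₂ : D(Y) ≃o D(X)`, and
`Φ₁⁻¹ ∘ Φ₂` is an isometry as soon as `e₁ = e₂`. A non-isometric pair thus gives an order
automorphism `g` of `D(X)` moving some point `z`, say `z < g z`; then `D(X)` splits into the
points below the orbit of `z`, the translates `gⁿ [z, g z)` for `n : ℤ`, and the points above
the orbit.

Conversely, shifting the `ℤ`-coordinate of `A₁ + A₂·ℤ + A₃` is a non-trivial automorphism. On a
set `D ∋ 0` of nonnegative reals, `d(x, y) = max x y` for `x ≠ y` is an ultrametric with distance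
set `D`; order isomorphisms between such sets are weak similarities for these ultrametrics, and an
order automorphism that is an isometry fixes `0`, hence every point since `d(x, 0) = x`.
-/

open Sum

theorem Sum.Lex.strictMono_elim {α β γ : Type*} [Preorder α] [Preorder β] [Preorder γ]
    {f : α → γ} {g : β → γ} (hf : StrictMono f) (hg : StrictMono g) (hfg : ∀ a b, f a < g b) :
    StrictMono fun x : α ⊕ₗ β => Sum.elim f g (ofLex x) := by
  rintro (a | b) (a' | b') (h | h | h)
  · exact hf h
  · exact hfg a b'
  · exact hg h

theorem Monotone.exists_apply_le_lt_apply_add_one {α : Type*} [LinearOrder α] {f : ℤ → α}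
    (hf : Monotone f) {x : α} (hlo : ∃ m, f m ≤ x) (hhi : ∃ n, x < f n) :
    ∃ n, f n ≤ x ∧ x < f (n + 1) := by
  obtain ⟨n, hn⟩ := hhi
  obtain ⟨k, hk, hmax⟩ := Int.exists_greatest_of_bdd
    ⟨n, fun k hk => by_contra fun hnk => (hn.trans_le (hf (not_le.1 hnk).le)).not_ge hk⟩ hlo
  exact ⟨k, hk, lt_of_not_ge fun h => (hmax _ h).not_gt (lt_add_one k)⟩

namespace OrderIso

variable {α : Type*} [LinearOrder α] (g : α ≃o α) (z : α)

def belowOrbit : Set α := {a | ∀ n : ℤ, a < (g ^ n) z}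

def aboveOrbit : Set α := {a | ∀ n : ℤ, (g ^ n) z ≤ a}

lemma zpow_apply_zpow_apply (m n : ℤ) (x : α) : (g ^ m) ((g ^ n) x) = (g ^ (m + n)) x := by
  rw [zpow_add, RelIso.mul_apply]

def orbitSum : belowOrbit g z ⊕ₗ ((ℤ ×ₗ Set.Ico z (g z)) ⊕ₗ aboveOrbit g z) → α :=
  fun x => Sum.elim Subtype.val
    (fun y => Sum.elim (fun m => (g ^ (ofLex m).1) (ofLex m).2) Subtype.val (ofLex y)) (ofLex x)

variable {g z}

lemma zpow_apply_mem_Ico {b : α} (hb : b ∈ Set.Ico z (g z)) (n : ℤ) :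
    (g ^ n) b ∈ Set.Ico ((g ^ n) z) ((g ^ (n + 1)) z) := by
  rw [← zpow_apply_zpow_apply, zpow_one]
  exact ⟨(g ^ n).monotone hb.1, (g ^ n).strictMono hb.2⟩

lemma strictMono_zpow_apply (hz : z < g z) : StrictMono fun n : ℤ => (g ^ n) z :=
  strictMono_int_of_lt_succ fun n => (zpow_apply_mem_Ico ⟨le_rfl, hz⟩ n).2

lemma strictMono_orbitSum (hz : z < g z) : StrictMono (orbitSum g z) := by
  have hmono := (strictMono_zpow_apply hz).monotone
  have hmid : StrictMono fun m : ℤ ×ₗ Set.Ico z (g z) => (g ^ (ofLex m).1) (ofLex m).2 := by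
    rintro ⟨n, b⟩ ⟨n', b'⟩ (hn | hb)
    · calc (g ^ n) b < (g ^ (n + 1)) z := (zpow_apply_mem_Ico b.2 n).2
        _ ≤ (g ^ n') z := hmono (Int.add_one_le_of_lt ‹_›)
        _ ≤ (g ^ n') b' := (zpow_apply_mem_Ico b'.2 n').1
    · exact (g ^ n).strictMono ‹_›
  refine Sum.Lex.strictMono_elim (Subtype.strictMono_coe _)
    (Sum.Lex.strictMono_elim hmid (Subtype.strictMono_coe _) ?_) ?_
  · rintro ⟨n, b⟩ c
    exact (zpow_apply_mem_Ico b.2 n).2.trans_le (c.2 (n + 1))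
  · rintro a (⟨n, b⟩ | c)
    · exact (a.2 n).trans_le (zpow_apply_mem_Ico b.2 n).1
    · exact (a.2 0).trans_le (c.2 0)

lemma surjective_orbitSum (hz : z < g z) : Function.Surjective (orbitSum g z) := by
  intro x
  by_cases hlo : ∃ m : ℤ, (g ^ m) z ≤ x
  · by_cases hhi : ∃ n : ℤ, x < (g ^ n) z
    · obtain ⟨n, hn⟩ := (strictMono_zpow_apply hz).monotone.exists_apply_le_lt_apply_add_one hlo hhi
      have hb : (g ^ (-n)) x ∈ Set.Ico z (g z) := by
        constructor
        · simpa [zpow_apply_zpow_apply] using (g ^ (-n)).monotone hn.1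
        · have h := (g ^ (-n)).strictMono hn.2
          rwa [zpow_apply_zpow_apply, neg_add_cancel_left, zpow_one] at h
      exact ⟨inrₗ (inlₗ (toLex (n, ⟨_, hb⟩))), by simp [orbitSum]⟩
    · push Not at hhi
      exact ⟨inrₗ (inrₗ ⟨x, hhi⟩), rfl⟩
  · push Not at hlo
    exact ⟨inlₗ ⟨x, hlo⟩, rfl⟩

noncomputable def orbitSumOrderIso (hz : z < g z) :
    belowOrbit g z ⊕ₗ ((ℤ ×ₗ Set.Ico z (g z)) ⊕ₗ aboveOrbit g z) ≃o α :=
  StrictMono.orderIsoOfSurjective _ (strictMono_orbitSum hz) (surjective_orbitSum hz)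

lemma exists_orderIso_zSum_of_ne_refl (hg : g ≠ OrderIso.refl α) :
    ∃ S₁ S₂ S₃ : Set α, S₂.Nonempty ∧ Nonempty (α ≃o S₁ ⊕ₗ ((ℤ ×ₗ S₂) ⊕ₗ S₃)) := by
  obtain ⟨x, hx⟩ : ∃ x, g x ≠ x := not_forall.1 fun h => hg (OrderIso.ext (funext h))
  rcases hx.lt_or_gt with hlt | hgt
  · have hz : g x < g.symm (g x) := by simpa using hlt
    exact ⟨_, _, _, Set.nonempty_Ico.2 hz, ⟨(orbitSumOrderIso hz).symm⟩⟩
  · exact ⟨_, _, _, Set.nonempty_Ico.2 hgt, ⟨(orbitSumOrderIso hgt).symm⟩⟩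

end OrderIso

noncomputable def zSumShift (α β γ : Type*) [Preorder α] [Preorder β] [Preorder γ] :
    α ⊕ₗ ((ℤ ×ₗ β) ⊕ₗ γ) ≃o α ⊕ₗ ((ℤ ×ₗ β) ⊕ₗ γ) :=
  OrderIso.sumLexCongr (.refl α)
    (OrderIso.sumLexCongr (Prod.Lex.prodLexCongr (OrderIso.addRight 1) (.refl β)) (.refl γ))

lemma zSumShift_ne_refl {α β γ : Type*} [Preorder α] [Preorder β] [Preorder γ] [Nonempty β] :
    zSumShift α β γ ≠ OrderIso.refl _ := by
  intro h
  have := congrArg (· (inrₗ (inlₗ (toLex (0, Classical.arbitrary β))))) h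
  simp [zSumShift] at this

lemma exists_isZSumType_of_ne_refl {D : Set ℝ} {g : D ≃o D} (hg : g ≠ OrderIso.refl D) :
    ∃ A₁ A₂ A₃ : Set ℝ, A₁ ⊆ D ∧ A₂ ⊆ D ∧ A₃ ⊆ D ∧ A₂.Nonempty ∧ IsZSumType D A₁ A₂ A₃ := by
  obtain ⟨S₁, S₂, S₃, hS₂, ⟨e⟩⟩ := OrderIso.exists_orderIso_zSum_of_ne_refl hg
  let val (S : Set D) : S ≃o ((↑) '' S : Set ℝ) :=
    StrictMonoOn.orderIso _ S ((Subtype.strictMono_coe _).strictMonoOn S)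
  refine ⟨(↑) '' S₁, (↑) '' S₂, (↑) '' S₃, by simp, by simp, by simp, hS₂.image _, ⟨e.trans ?_⟩⟩
  exact OrderIso.sumLexCongr (val S₁)
    (OrderIso.sumLexCongr (Prod.Lex.prodLexCongr (.refl ℤ) (val S₂)) (val S₃))

lemma IsZSumType.of_orderIso {D E A₁ A₂ A₃ : Set ℝ} (e : D ≃o E) (h : IsZSumType E A₁ A₂ A₃) :
    IsZSumType D A₁ A₂ A₃ :=
  ⟨e.trans h.some⟩

lemma IsZSumType.exists_ne_refl {D A₁ A₂ A₃ : Set ℝ} (h : IsZSumType D A₁ A₂ A₃)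
    (hA₂ : A₂.Nonempty) : ∃ g : D ≃o D, g ≠ OrderIso.refl D := by
  have := hA₂.to_subtype
  obtain ⟨e⟩ := h
  refine ⟨(e.trans (zSumShift _ _ _)).trans e.symm, fun hg => ?_⟩
  apply zSumShift_ne_refl (α := A₁) (β := A₂) (γ := A₃)
  ext x
  simpa using congrArg e (DFunLike.congr_fun hg (e.symm x))

section MaxDist

variable {D E : Set ℝ}

open Classical in
noncomputable def maxDist (D : Set ℝ) (x y : D) : ℝ := if x = y then 0 else ↑(max x y)

lemma maxDist_self (x : D) : maxDist D x x = 0 := if_pos rfl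

lemma maxDist_of_ne {x y : D} (h : x ≠ y) : maxDist D x y = ↑(max x y) := if_neg h

lemma maxDist_nonneg (hD : D ⊆ Set.Ici 0) (x y : D) : 0 ≤ maxDist D x y := by
  by_cases h : x = y
  · rw [h, maxDist_self]
  · rw [maxDist_of_ne h]
    exact le_max_of_le_left (hD x.2)

lemma coe_le_maxDist_left {x y : D} (h : x ≠ y) : (x : ℝ) ≤ maxDist D x y := by
  rw [maxDist_of_ne h]
  exact le_max_left _ _

lemma coe_le_maxDist_right {x y : D} (h : x ≠ y) : (y : ℝ) ≤ maxDist D x y := by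
  rw [maxDist_of_ne h]
  exact le_max_right _ _

lemma isUltrametric_maxDist (hD : D ⊆ Set.Ici 0) : IsUltrametric (maxDist D) := by
  refine ⟨⟨maxDist_nonneg hD, fun x y => ?_, fun x y => ⟨fun h => ?_, ?_⟩⟩, fun x y z => ?_⟩
  · simp only [maxDist, eq_comm, max_comm]
  · by_contra hxy
    rw [maxDist_of_ne hxy] at h
    have hx : (x : ℝ) = 0 := le_antisymm (h ▸ le_max_left _ _) (hD x.2)
    have hy : (y : ℝ) = 0 := le_antisymm (h ▸ le_max_right _ _) (hD y.2)
    exact hxy (Subtype.ext (hx.trans hy.symm))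
  · rintro rfl
    exact maxDist_self x
  · by_cases hxy : x = y
    · rw [hxy, maxDist_self]
      exact le_max_of_le_left (maxDist_nonneg hD _ _)
    rw [maxDist_of_ne hxy]
    refine max_le ?_ ?_
    · by_cases hxz : x = z
      · subst hxz
        exact le_max_of_le_right (coe_le_maxDist_left hxy)
      · exact le_max_of_le_left (coe_le_maxDist_left hxz)
    · by_cases hzy : z = y
      · subst hzy
        exact le_max_of_le_left (coe_le_maxDist_right hxy)
      · exact le_max_of_le_right (coe_le_maxDist_right hzy)

lemma maxDist_zero_right (hD : D ⊆ Set.Ici 0) (h0 : 0 ∈ D) (x : D) :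
    maxDist D x ⟨0, h0⟩ = x := by
  by_cases hx : x = ⟨0, h0⟩
  · rw [hx, maxDist_self]
  · rw [maxDist_of_ne hx]
    exact max_eq_left (hD x.2)

lemma maxDist_mem (h0 : 0 ∈ D) (x y : D) : maxDist D x y ∈ D := by
  by_cases h : x = y
  · rwa [h, maxDist_self]
  · rw [maxDist_of_ne h]
    exact (max x y).2

lemma distSet_maxDist (hD : D ⊆ Set.Ici 0) (h0 : 0 ∈ D) : distSet (maxDist D) = D := by
  ext r
  constructor
  · rintro ⟨x, y, rfl⟩
    exact maxDist_mem h0 x y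
  · intro hr
    exact ⟨⟨r, hr⟩, ⟨0, h0⟩, maxDist_zero_right hD h0 _⟩

lemma OrderIso.map_zero_of_subset_Ici (hD : D ⊆ Set.Ici 0) (hE : E ⊆ Set.Ici 0) (h0D : 0 ∈ D)
    (h0E : 0 ∈ E) (ψ : D ≃o E) : ψ ⟨0, h0D⟩ = ⟨0, h0E⟩ := by
  refine le_antisymm ?_ (hE (ψ _).2)
  calc ψ ⟨0, h0D⟩ ≤ ψ (ψ.symm ⟨0, h0E⟩) := ψ.monotone (hD (ψ.symm _).2)
    _ = ⟨0, h0E⟩ := ψ.apply_symm_apply _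

lemma OrderIso.maxDist_map (hD : D ⊆ Set.Ici 0) (hE : E ⊆ Set.Ici 0) (h0D : 0 ∈ D)
    (h0E : 0 ∈ E) (ψ : D ≃o E) (x y : D) :
    maxDist E (ψ x) (ψ y) = ψ ⟨maxDist D x y, maxDist_mem h0D x y⟩ := by
  by_cases h : x = y
  · simp only [h, maxDist_self, ψ.map_zero_of_subset_Ici hD hE h0D h0E]
  · rw [maxDist_of_ne (ψ.injective.ne h), ← ψ.monotone.map_max]
    congr
    exact Subtype.ext (maxDist_of_ne h).symm

lemma isWeakSimilarity_maxDist (hD : D ⊆ Set.Ici 0) (hE : E ⊆ Set.Ici 0) (h0D : 0 ∈ D)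
    (h0E : 0 ∈ E) (ψ : D ≃o E) : IsWeakSimilarity (maxDist D) (maxDist E) ψ := by
  classical
  refine ⟨ψ.surjective, fun r => if hr : r ∈ E then (ψ.symm ⟨r, hr⟩ : ℝ) else 0, ?_, ?_, ?_⟩
  · rw [distSet_maxDist hE h0E]
    intro r hr s hs hrs
    simpa [hr, hs] using hrs
  · rw [distSet_maxDist hE h0E, distSet_maxDist hD h0D]
    intro r hr
    simp [hr]
  · intro x y
    simp [ψ.maxDist_map hD hE h0D h0E]

lemma OrderIso.eq_refl_of_maxDist_isometry (hD : D ⊆ Set.Ici 0) (h0 : 0 ∈ D) (g : D ≃o D)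
    (hg : ∀ x y, maxDist D (g x) (g y) = maxDist D x y) : g = OrderIso.refl D := by
  ext x
  have := hg x ⟨0, h0⟩
  rwa [g.map_zero_of_subset_Ici hD hD h0 h0, maxDist_zero_right hD, maxDist_zero_right hD] at this

end MaxDist

def HasNonIsometricWeakSimilarities (P : ∀ {X : Type}, (X → X → ℝ) → Prop) (D₁ D₂ : Set ℝ) :
    Prop :=
  ∃ (X Y : Type) (dX : X → X → ℝ) (dY : Y → Y → ℝ), P dX ∧ P dY ∧
    distSet dX = D₁ ∧ distSet dY = D₂ ∧
    ∃ Φ₁ Φ₂ : X → Y, IsWeakSimilarity dX dY Φ₁ ∧ IsWeakSimilarity dX dY Φ₂ ∧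
      ∃ Ψ₁ : Y → X, (∀ x, Ψ₁ (Φ₁ x) = x) ∧ (∀ y, Φ₁ (Ψ₁ y) = y) ∧
        ¬ ∀ x y, dX (Ψ₁ (Φ₂ x)) (Ψ₁ (Φ₂ y)) = dX x y

lemma HasNonIsometricWeakSimilarities.mono {P Q : ∀ {X : Type}, (X → X → ℝ) → Prop}
    (hPQ : ∀ {X : Type} (d : X → X → ℝ), P d → Q d) {D₁ D₂ : Set ℝ}
    (h : HasNonIsometricWeakSimilarities P D₁ D₂) : HasNonIsometricWeakSimilarities Q D₁ D₂ := by
  obtain ⟨X, Y, dX, dY, hX, hY, rest⟩ := h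
  exact ⟨X, Y, dX, dY, hPQ dX hX, hPQ dY hY, rest⟩

lemma hasNonIsometricWeakSimilarities_maxDist {D₁ D₂ : Set ℝ} (hD₁ : D₁ ⊆ Set.Ici 0)
    (hD₂ : D₂ ⊆ Set.Ici 0) (h₁ : 0 ∈ D₁) (h₂ : 0 ∈ D₂) (φ : D₁ ≃o D₂) {g : D₁ ≃o D₁}
    (hg : g ≠ OrderIso.refl D₁) : HasNonIsometricWeakSimilarities IsUltrametric D₁ D₂ :=
  ⟨D₁, D₂, maxDist D₁, maxDist D₂, isUltrametric_maxDist hD₁, isUltrametric_maxDist hD₂,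
    distSet_maxDist hD₁ h₁, distSet_maxDist hD₂ h₂, φ, g.trans φ,
    isWeakSimilarity_maxDist hD₁ hD₂ h₁ h₂ φ, isWeakSimilarity_maxDist hD₁ hD₂ h₁ h₂ _,
    φ.symm, φ.symm_apply_apply, φ.apply_symm_apply,
    fun h => hg (g.eq_refl_of_maxDist_isometry hD₁ h₁ (by simpa using h))⟩

lemma IsWeakSimilarity.exists_orderIso {X Y : Type*} {dX : X → X → ℝ} {dY : Y → Y → ℝ}
    {Φ : X → Y} (h : IsWeakSimilarity dX dY Φ) :
    ∃ e : distSet dY ≃o distSet dX, ∀ x y, dX x y = e ⟨dY (Φ x) (Φ y), Φ x, Φ y, rfl⟩ := by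
  obtain ⟨-, f, hmono, hmaps, hf⟩ := h
  refine ⟨StrictMono.orderIsoOfSurjective (fun s => ⟨f s, hmaps s.2⟩)
    (fun s t hst => hmono s.2 t.2 hst) ?_, hf⟩
  rintro ⟨_, x, y, rfl⟩
  exact ⟨⟨_, Φ x, Φ y, rfl⟩, Subtype.ext (hf x y).symm⟩

def SharesZSumType (D₁ D₂ : Set ℝ) : Prop :=
  ∃ A₁ A₂ A₃ : Set ℝ, A₁ ⊆ Set.Ici 0 ∧ A₂ ⊆ Set.Ici 0 ∧ A₃ ⊆ Set.Ici 0 ∧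
    A₂.Nonempty ∧ IsZSumType D₁ A₁ A₂ A₃ ∧ IsZSumType D₂ A₁ A₂ A₃

lemma SharesZSumType.hasNonIsometricWeakSimilarities {D₁ D₂ : Set ℝ} (hD₁ : D₁ ⊆ Set.Ici 0)
    (hD₂ : D₂ ⊆ Set.Ici 0) (h₁ : 0 ∈ D₁) (h₂ : 0 ∈ D₂) (h : SharesZSumType D₁ D₂) :
    HasNonIsometricWeakSimilarities IsUltrametric D₁ D₂ := by
  obtain ⟨A₁, A₂, A₃, -, -, -, hA₂, hZ₁, hZ₂⟩ := h
  obtain ⟨g, hg⟩ := hZ₁.exists_ne_refl hA₂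
  exact hasNonIsometricWeakSimilarities_maxDist hD₁ hD₂ h₁ h₂ (hZ₁.some.trans hZ₂.some.symm) hg

lemma HasNonIsometricWeakSimilarities.sharesZSumType {P : ∀ {X : Type}, (X → X → ℝ) → Prop}
    {D₁ D₂ : Set ℝ} (hD₁ : D₁ ⊆ Set.Ici 0) (h : HasNonIsometricWeakSimilarities P D₁ D₂) :
    SharesZSumType D₁ D₂ := by
  obtain ⟨X, Y, dX, dY, -, -, rfl, rfl, Φ₁, Φ₂, hΦ₁, hΦ₂, Ψ₁, -, hΦΨ, hne⟩ := h
  obtain ⟨e₁, he₁⟩ := hΦ₁.exists_orderIso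
  obtain ⟨e₂, he₂⟩ := hΦ₂.exists_orderIso
  have hg : e₁.symm.trans e₂ ≠ OrderIso.refl _ := by
    intro hg
    have he : e₁ = e₂ := OrderIso.ext <| funext fun s => by
      simpa using (DFunLike.congr_fun hg (e₁ s)).symm
    refine hne fun x y => ?_
    rw [he₁, he₂, he]
    simp only [hΦΨ]
  obtain ⟨A₁, A₂, A₃, h₁, h₂, h₃, hA₂, hZ⟩ := exists_isZSumType_of_ne_refl hg
  exact ⟨A₁, A₂, A₃, h₁.trans hD₁, h₂.trans hD₁, h₃.trans hD₁, hA₂, hZ, hZ.of_orderIso e₁⟩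

theorem stmt14 (D₁ D₂ : Set ℝ) (hD₁ : D₁ ⊆ Set.Ici 0) (hD₂ : D₂ ⊆ Set.Ici 0)
    (h₁ : (0 : ℝ) ∈ D₁) (h₂ : (0 : ℝ) ∈ D₂) :
    ((∃ A₁ A₂ A₃ : Set ℝ, A₁ ⊆ Set.Ici 0 ∧ A₂ ⊆ Set.Ici 0 ∧ A₃ ⊆ Set.Ici 0 ∧
        A₂.Nonempty ∧ IsZSumType D₁ A₁ A₂ A₃ ∧ IsZSumType D₂ A₁ A₂ A₃) ↔
      (∃ (X Y : Type) (dX : X → X → ℝ) (dY : Y → Y → ℝ),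
        IsUltrametric dX ∧ IsUltrametric dY ∧
        distSet dX = D₁ ∧ distSet dY = D₂ ∧
        ∃ Φ₁ Φ₂ : X → Y, IsWeakSimilarity dX dY Φ₁ ∧ IsWeakSimilarity dX dY Φ₂ ∧
          ∃ Ψ₁ : Y → X, (∀ x, Ψ₁ (Φ₁ x) = x) ∧ (∀ y, Φ₁ (Ψ₁ y) = y) ∧
            ¬ ∀ x y, dX (Ψ₁ (Φ₂ x)) (Ψ₁ (Φ₂ y)) = dX x y)) ∧
    ((∃ (X Y : Type) (dX : X → X → ℝ) (dY : Y → Y → ℝ),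
        IsUltrametric dX ∧ IsUltrametric dY ∧
        distSet dX = D₁ ∧ distSet dY = D₂ ∧
        ∃ Φ₁ Φ₂ : X → Y, IsWeakSimilarity dX dY Φ₁ ∧ IsWeakSimilarity dX dY Φ₂ ∧
          ∃ Ψ₁ : Y → X, (∀ x, Ψ₁ (Φ₁ x) = x) ∧ (∀ y, Φ₁ (Ψ₁ y) = y) ∧
            ¬ ∀ x y, dX (Ψ₁ (Φ₂ x)) (Ψ₁ (Φ₂ y)) = dX x y) ↔
      (∃ (X Y : Type) (dX : X → X → ℝ) (dY : Y → Y → ℝ),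
        IsSemimetric dX ∧ IsSemimetric dY ∧
        distSet dX = D₁ ∧ distSet dY = D₂ ∧
        ∃ Φ₁ Φ₂ : X → Y, IsWeakSimilarity dX dY Φ₁ ∧ IsWeakSimilarity dX dY Φ₂ ∧
          ∃ Ψ₁ : Y → X, (∀ x, Ψ₁ (Φ₁ x) = x) ∧ (∀ y, Φ₁ (Ψ₁ y) = y) ∧
            ¬ ∀ x y, dX (Ψ₁ (Φ₂ x)) (Ψ₁ (Φ₂ y)) = dX x y)) := by
  have zSum_ultrametric : SharesZSumType D₁ D₂ →
      HasNonIsometricWeakSimilarities IsUltrametric D₁ D₂ :=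
    SharesZSumType.hasNonIsometricWeakSimilarities hD₁ hD₂ h₁ h₂
  have semimetric_zSum : HasNonIsometricWeakSimilarities IsSemimetric D₁ D₂ →
      SharesZSumType D₁ D₂ :=
    HasNonIsometricWeakSimilarities.sharesZSumType hD₁
  have ultrametric_semimetric : HasNonIsometricWeakSimilarities IsUltrametric D₁ D₂ →
      HasNonIsometricWeakSimilarities IsSemimetric D₁ D₂ :=
    HasNonIsometricWeakSimilarities.mono fun _ h => h.1
  exact ⟨⟨zSum_ultrametric, semimetric_zSum ∘ ultrametric_semimetric⟩,
    ⟨ultrametric_semimetric, zSum_ultrametric ∘ semimetric_zSum⟩⟩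
end

section
/- Let (X,d_X) and (Y,d_Y) be semimetric spaces and let Φ : X → Y be a weak similarity with scaling function f : D(Y) → D(X). If f and its inverse f⁻¹ : D(X) → D(Y) are both subadditive in the generalized sense and 0 ∈ ac(D(X)) ∩ ac(D(Y)), then Φ is a similarity: there exists r > 0 such that d_Y(Φ(x),Φ(y)) = r·d_X(x,y) for all x, y ∈ X. -/
open Filter

/-- `f` is subadditive in the generalized sense on `A`: whenever `x ∈ A` is at most the
sum of a nonempty finite family of elements of `A`, `f x` is at most the sum of the images. -/
def GenSubadditive (f : ℝ → ℝ) (A : Set ℝ) : Prop :=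
  ∀ x ∈ A, ∀ l : List ℝ, l ≠ [] → (∀ y ∈ l, y ∈ A) → x ≤ l.sum → f x ≤ (l.map f).sum

/-- From generalized subadditivity, by using a list of `⌈x/u⌉` copies of `u`. -/
lemma genSub_ratio {h : ℝ → ℝ} {A : Set ℝ} (hs : GenSubadditive h A) {x u : ℝ}
    (hx : x ∈ A) (hu : u ∈ A) (hxpos : 0 < x) (hupos : 0 < u) (hhu : 0 ≤ h u) :
    h x ≤ (x / u + 1) * h u := by
  set m : ℕ := ⌈x / u⌉₊ with hm
  have hdivpos : 0 < x / u := div_pos hxpos hupos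
  have hm1 : 1 ≤ m := Nat.one_le_ceil_iff.mpr hdivpos
  have hne : List.replicate m u ≠ [] := by
    intro h
    have := congrArg List.length h
    simp at this
    omega
  have hmem : ∀ y ∈ List.replicate m u, y ∈ A := by
    intro y hy; rw [List.eq_of_mem_replicate hy]; exact hu
  have hsum : (List.replicate m u).sum = (m : ℝ) * u := by
    simp [List.sum_replicate, nsmul_eq_mul]
  have hxle : x ≤ (List.replicate m u).sum := by
    rw [hsum]
    have := Nat.le_ceil (x / u)
    calc x = (x / u) * u := by field_simp
    _ ≤ (m : ℝ) * u := by
        exact mul_le_mul_of_nonneg_right this hupos.le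
  have hmap : ((List.replicate m u).map h).sum = (m : ℝ) * h u := by
    simp [List.sum_replicate, nsmul_eq_mul]
  have key := hs x hx (List.replicate m u) hne hmem hxle
  rw [hmap] at key
  have hmle : (m : ℝ) ≤ x / u + 1 := (Nat.ceil_lt_add_one hdivpos.le).le
  calc h x ≤ (m : ℝ) * h u := key
  _ ≤ (x / u + 1) * h u := mul_le_mul_of_nonneg_right hmle hhu

/-- From an accumulation point at 0, arbitrarily small positive elements of `A`
(provided `A` consists of nonnegative reals). -/
lemma accPt_small {A : Set ℝ} (h : AccPt (0 : ℝ) (𝓟 A)) (hA : ∀ a ∈ A, 0 ≤ a)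
    {ε : ℝ} (hε : 0 < ε) : ∃ u ∈ A, 0 < u ∧ u < ε := by
  rw [accPt_iff_nhds] at h
  obtain ⟨y, ⟨hy1, hy2⟩, hy3⟩ := h (Metric.ball 0 ε) (Metric.ball_mem_nhds _ hε)
  have hyε : |y| < ε := by simpa [Real.dist_eq] using hy1
  exact ⟨y, hy2, lt_of_le_of_ne (hA y hy2) (Ne.symm hy3),
    lt_of_le_of_lt (le_abs_self y) hyε⟩

theorem stmt16 {X Y : Type*} (dX : X → X → ℝ) (dY : Y → Y → ℝ)
    (hX : IsSemimetric dX) (hY : IsSemimetric dY)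
    (Φ : X → Y) (f g : ℝ → ℝ)
    (hsurj : Function.Surjective Φ)
    (hmono : StrictMonoOn f (distSet dY))
    (hmaps : Set.MapsTo f (distSet dY) (distSet dX))
    (heq : ∀ x y, dX x y = f (dY (Φ x) (Φ y)))
    (hgmaps : Set.MapsTo g (distSet dX) (distSet dY))
    (hgf : ∀ t ∈ distSet dY, g (f t) = t) (hfg : ∀ s ∈ distSet dX, f (g s) = s)
    (hfsub : GenSubadditive f (distSet dY))
    (hgsub : GenSubadditive g (distSet dX))
    (hacX : AccPt (0 : ℝ) (𝓟 (distSet dX)))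
    (hacY : AccPt (0 : ℝ) (𝓟 (distSet dY))) :
    ∃ r : ℝ, 0 < r ∧ ∀ x y, dY (Φ x) (Φ y) = r * dX x y := by
  -- nonnegativity of distance sets
  have hDYnn : ∀ t ∈ distSet dY, 0 ≤ t := by
    rintro t ⟨a, b, rfl⟩; exact hY.1 a b
  have hDXnn : ∀ s ∈ distSet dX, 0 ≤ s := by
    rintro s ⟨a, b, rfl⟩; exact hX.1 a b
  -- 0 belongs to both distance sets
  obtain ⟨t₀, ht₀Y, ht₀pos, -⟩ := accPt_small hacY hDYnn one_pos
  obtain ⟨a₀, b₀, -⟩ := id ht₀Y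
  have h0Y : (0 : ℝ) ∈ distSet dY := ⟨a₀, a₀, (hY.2.2 a₀ a₀).mpr rfl⟩
  -- f 0 = 0
  have hf0 : f 0 = 0 := by
    by_contra hne
    have hf0X : f 0 ∈ distSet dX := hmaps h0Y
    have hf0pos : 0 < f 0 := lt_of_le_of_ne (hDXnn _ hf0X) (Ne.symm hne)
    obtain ⟨σ, hσX, hσpos, hσlt⟩ := accPt_small hacX hDXnn hf0pos
    have hgσY : g σ ∈ distSet dY := hgmaps hσX
    have hfgσ : f (g σ) = σ := hfg σ hσX
    rcases eq_or_lt_of_le (hDYnn _ hgσY) with h | h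
    · rw [← h] at hfgσ; linarith
    · have := hmono h0Y hgσY h
      rw [hfgσ] at this
      exact absurd (this.trans hσlt) (lt_irrefl _)
  -- f is positive on positive elements
  have hfpos : ∀ t ∈ distSet dY, 0 < t → 0 < f t := by
    intro t ht htpos
    have := hmono h0Y ht htpos
    rwa [hf0] at this
  -- key inequality: for positive t₁ t₂ in D(Y), f t₁ * t₂ ≤ f t₂ * t₁
  have key : ∀ t₁ ∈ distSet dY, ∀ t₂ ∈ distSet dY, 0 < t₁ → 0 < t₂ →
      f t₁ * t₂ ≤ f t₂ * t₁ := by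
    intro t₁ ht₁ t₂ ht₂ hp₁ hp₂
    have hK : 0 < f t₁ + f t₂ := add_pos (hfpos _ ht₁ hp₁) (hfpos _ ht₂ hp₂)
    rw [← sub_nonpos]
    by_contra hpos
    push_neg at hpos
    have hεpos : 0 < min t₂ ((f t₁ * t₂ - f t₂ * t₁) / (f t₁ + f t₂)) :=
      lt_min hp₂ (div_pos hpos hK)
    obtain ⟨u, huY, hup, huε⟩ := accPt_small hacY hDYnn hεpos
    have hu2 : u < t₂ := huε.trans_le (min_le_left _ _)
    have hfu : 0 < f u := hfpos _ huY hup
    have h1 : f t₁ ≤ (t₁ / u + 1) * f u := genSub_ratio hfsub ht₁ huY hp₁ hup hfu.le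
    have h2 : t₂ ≤ (f t₂ / f u + 1) * u := by
      have := genSub_ratio hgsub (hmaps ht₂) (hmaps huY) (hfpos _ ht₂ hp₂) hfu
        (by rw [hgf u huY]; exact hup.le)
      rwa [hgf _ ht₂, hgf _ huY] at this
    have e1 : f t₁ * u ≤ (t₁ + u) * f u := by
      have h1' := mul_le_mul_of_nonneg_right h1 hup.le
      have heq1 : (t₁ / u + 1) * f u * u = (t₁ + u) * f u := by
        field_simp
      linarith [heq1 ▸ h1']
    have e2 : f u * (t₂ - u) ≤ f t₂ * u := by
      have h2' := mul_le_mul_of_nonneg_right h2 hfu.le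
      have heq2 : (f t₂ / f u + 1) * u * f u = (f t₂ + f u) * u := by
        field_simp
      nlinarith [h2', heq2]
    have hfinal : f t₁ * t₂ ≤ f t₂ * t₁ + u * (f t₁ + f t₂) := by
      have p1 := mul_le_mul_of_nonneg_right e1 (sub_nonneg.mpr hu2.le)
      have p2 := mul_le_mul_of_nonneg_left e2 (by linarith : (0:ℝ) ≤ t₁ + u)
      nlinarith [hup]
    have hsmall : u * (f t₁ + f t₂) < f t₁ * t₂ - f t₂ * t₁ := by
      have : u < (f t₁ * t₂ - f t₂ * t₁) / (f t₁ + f t₂) :=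
        huε.trans_le (min_le_right _ _)
      exact (lt_div_iff₀ hK).mp this
    linarith
  -- the ratio is constant
  have keyeq : ∀ t₁ ∈ distSet dY, ∀ t₂ ∈ distSet dY, 0 < t₁ → 0 < t₂ →
      f t₁ * t₂ = f t₂ * t₁ :=
    fun t₁ h₁ t₂ h₂ p₁ p₂ => le_antisymm (key t₁ h₁ t₂ h₂ p₁ p₂) (key t₂ h₂ t₁ h₁ p₂ p₁)
  have hft₀ : 0 < f t₀ := hfpos _ ht₀Y ht₀pos
  refine ⟨t₀ / f t₀, div_pos ht₀pos hft₀, fun x y => ?_⟩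
  set t := dY (Φ x) (Φ y) with ht
  have htY : t ∈ distSet dY := ⟨Φ x, Φ y, rfl⟩
  have hdx : dX x y = f t := heq x y
  rcases eq_or_lt_of_le (hDYnn _ htY) with h | h
  · rw [hdx, ← h, hf0, mul_zero]
  · have := keyeq t htY t₀ ht₀Y h ht₀pos
    rw [hdx]
    field_simp
    linarith [this]
end

section
/- Let A, B ⊆ ℝ, let f : A → B be strictly increasing and surjective with inverse f⁻¹ : B → A, let x₀ ∈ A and y₀ = f(x₀). If x₀ is an accumulation point of A ∩ (x₀,∞) and y₀ is an accumulation point of B ∩ (y₀,∞), then D⁺f⁻¹(y₀) = 1 / D₊f(x₀), where the values are taken in [0,∞] with the conventions 1/0 = ∞ and 1/∞ = 0. -/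
open Filter

/-- The lower right Dini derivative of `f` at `x₀` over the set `A`, with values in `[0, ∞]`. -/
noncomputable def diniLower (f : ℝ → ℝ) (A : Set ℝ) (x₀ : ℝ) : ENNReal :=
  Filter.liminf (fun x => ENNReal.ofReal ((f x - f x₀) / (x - x₀)))
    (nhdsWithin x₀ (A ∩ Set.Ioi x₀))

/-- The upper right Dini derivative of `f` at `x₀` over the set `A`, with values in `[0, ∞]`. -/
noncomputable def diniUpper (f : ℝ → ℝ) (A : Set ℝ) (x₀ : ℝ) : ENNReal :=
  Filter.limsup (fun x => ENNReal.ofReal ((f x - f x₀) / (x - x₀)))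
    (nhdsWithin x₀ (A ∩ Set.Ioi x₀))

lemma nhdsWithin_inter_Ioi_eq (S : Set ℝ) (x₀ : ℝ) :
    nhdsWithin x₀ (S ∩ Set.Ioi x₀) = (nhdsWithin x₀ {x₀}ᶜ) ⊓ 𝓟 (S ∩ Set.Ioi x₀) := by
  have h : 𝓟 (S ∩ Set.Ioi x₀) ≤ 𝓟 ({x₀}ᶜ) :=
    Filter.principal_mono.2 fun x hx => Set.mem_compl_singleton_iff.2 (ne_of_gt hx.2)
  rw [nhdsWithin, nhdsWithin, inf_assoc, inf_eq_right.2 h]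

lemma neBot_of_accPt {S : Set ℝ} {x₀ : ℝ} (h : AccPt x₀ (𝓟 (S ∩ Set.Ioi x₀))) :
    (nhdsWithin x₀ (S ∩ Set.Ioi x₀)).NeBot := by
  rw [nhdsWithin_inter_Ioi_eq]
  exact h

lemma tendsto_aux (A B : Set ℝ) (f g : ℝ → ℝ)
    (hmono : StrictMonoOn f A) (hmaps : Set.MapsTo f A B) (hgmaps : Set.MapsTo g B A)
    (hfg : ∀ y ∈ B, f (g y) = y)
    (x₀ y₀ : ℝ) (hx₀ : x₀ ∈ A) (hy₀ : y₀ = f x₀)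
    (hB : (nhdsWithin y₀ (B ∩ Set.Ioi y₀)).NeBot) :
    Filter.Tendsto f (nhdsWithin x₀ (A ∩ Set.Ioi x₀)) (nhdsWithin y₀ (B ∩ Set.Ioi y₀)) := by
  have hmem : ∀ᶠ x in nhdsWithin x₀ (A ∩ Set.Ioi x₀), x ∈ A ∩ Set.Ioi x₀ :=
    eventually_mem_nhdsWithin
  rw [tendsto_nhdsWithin_iff]
  constructor
  · rw [tendsto_order]
    constructor
    · intro b hb
      filter_upwards [hmem] with x hx
      exact lt_trans hb (hy₀ ▸ hmono hx₀ hx.1 hx.2)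
    · intro b hb
      -- find y ∈ B ∩ Ioi y₀ with y < b
      have : (B ∩ Set.Ioi y₀) ∩ Set.Iio b ∈ nhdsWithin y₀ (B ∩ Set.Ioi y₀) :=
        inter_mem self_mem_nhdsWithin (mem_nhdsWithin_of_mem_nhds (Iio_mem_nhds hb))
      obtain ⟨y, ⟨hyB, hyI⟩, hyb⟩ := hB.nonempty_of_mem this
      set a := g y with ha
      have haA : a ∈ A := hgmaps hyB
      have hfa : f a = y := hfg y hyB
      have hax : x₀ < a := by
        by_contra h
        push_neg at h
        have := hmono.monotoneOn haA hx₀ h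
        rw [hfa, ← hy₀] at this
        exact absurd hyI (not_lt.2 this)
      have : (A ∩ Set.Ioi x₀) ∩ Set.Iio a ∈ nhdsWithin x₀ (A ∩ Set.Ioi x₀) :=
        inter_mem self_mem_nhdsWithin (mem_nhdsWithin_of_mem_nhds (Iio_mem_nhds hax))
      filter_upwards [this] with x ⟨hx, hxa⟩
      calc f x < f a := hmono hx.1 haA hxa
        _ = y := hfa
        _ < b := hyb
  · filter_upwards [hmem] with x hx
    exact ⟨hmaps hx.1, hy₀ ▸ hmono hx₀ hx.1 hx.2⟩

theorem stmt17 (A B : Set ℝ) (f g : ℝ → ℝ)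
    (hmono : StrictMonoOn f A)
    (hmaps : Set.MapsTo f A B) (hsurj : Set.SurjOn f A B)
    (hgf : ∀ x ∈ A, g (f x) = x) (hfg : ∀ y ∈ B, f (g y) = y)
    (x₀ : ℝ) (hx₀ : x₀ ∈ A) (y₀ : ℝ) (hy₀ : y₀ = f x₀)
    (haccA : AccPt x₀ (𝓟 (A ∩ Set.Ioi x₀)))
    (haccB : AccPt y₀ (𝓟 (B ∩ Set.Ioi y₀))) :
    diniUpper g B y₀ = (diniLower f A x₀)⁻¹ := by
  have hA : (nhdsWithin x₀ (A ∩ Set.Ioi x₀)).NeBot := neBot_of_accPt haccA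
  have hB : (nhdsWithin y₀ (B ∩ Set.Ioi y₀)).NeBot := neBot_of_accPt haccB
  have hgmaps : Set.MapsTo g B A := by
    intro y hy
    obtain ⟨a, haA, rfl⟩ := hsurj hy
    rw [hgf a haA]; exact haA
  have hgmono : StrictMonoOn g B := by
    intro y1 h1 y2 h2 h12
    by_contra h
    push_neg at h
    have := hmono.monotoneOn (hgmaps h2) (hgmaps h1) h
    rw [hfg y1 h1, hfg y2 h2] at this
    exact absurd h12 (not_lt.2 this)
  have hxy : x₀ = g y₀ := by rw [hy₀, hgf x₀ hx₀]
  have Tf : Filter.Tendsto f (nhdsWithin x₀ (A ∩ Set.Ioi x₀)) (nhdsWithin y₀ (B ∩ Set.Ioi y₀)) :=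
    tendsto_aux A B f g hmono hmaps hgmaps hfg x₀ y₀ hx₀ hy₀ hB
  have Tg : Filter.Tendsto g (nhdsWithin y₀ (B ∩ Set.Ioi y₀)) (nhdsWithin x₀ (A ∩ Set.Ioi x₀)) :=
    tendsto_aux B A g f hgmono hgmaps hmaps hgf y₀ x₀ (hy₀ ▸ hmaps hx₀) hxy hA
  set lA := nhdsWithin x₀ (A ∩ Set.Ioi x₀)
  set lB := nhdsWithin y₀ (B ∩ Set.Ioi y₀)
  have hmapeq : Filter.map f lA = lB := by
    refine le_antisymm Tf ?_
    have h1 : Filter.map (f ∘ g) lB = lB := by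
      have he : (f ∘ g) =ᶠ[lB] id := by
        filter_upwards [self_mem_nhdsWithin] with y hy
        exact hfg y hy.1
      rw [Filter.map_congr he, Filter.map_id]
    calc lB = Filter.map (f ∘ g) lB := h1.symm
      _ = Filter.map f (Filter.map g lB) := by rw [Filter.map_map]
      _ ≤ Filter.map f lA := Filter.map_mono Tg
  have key : ∀ᶠ x in lA,
      ENNReal.ofReal ((g (f x) - g y₀) / (f x - y₀))
        = (ENNReal.ofReal ((f x - f x₀) / (x - x₀)))⁻¹ := by
    filter_upwards [eventually_mem_nhdsWithin] with x hx
    have hq : 0 < (f x - f x₀) / (x - x₀) :=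
      div_pos (sub_pos.2 (hmono hx₀ hx.1 hx.2)) (sub_pos.2 hx.2)
    rw [hgf x hx.1, ← hxy, hy₀, ← ENNReal.ofReal_inv_of_pos hq, inv_div]
  calc diniUpper g B y₀
      = Filter.limsup (fun y => ENNReal.ofReal ((g y - g y₀) / (y - y₀))) (Filter.map f lA) := by
        rw [hmapeq]; rfl
    _ = Filter.limsup (fun x => ENNReal.ofReal ((g (f x) - g y₀) / (f x - y₀))) lA := by
        rw [← Filter.limsup_comp]; rfl
    _ = Filter.limsup (fun x => (ENNReal.ofReal ((f x - f x₀) / (x - x₀)))⁻¹) lA :=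
        Filter.limsup_congr key
    _ = (diniLower f A x₀)⁻¹ := by
        refine (Antitone.map_liminf_of_continuousAt (f := Inv.inv)
          (fun _ _ h => ENNReal.inv_le_inv.2 h)
          (fun x => ENNReal.ofReal ((f x - f x₀) / (x - x₀)))
          (continuous_inv.continuousAt)).symm
end

section
/- Let A ⊆ ℝ⁺ and let f : A → ℝ⁺ be subadditive in the generalized sense. Suppose 0 ∈ A, 0 is an accumulation point of A, and f(0) = 0. Then for every x ∈ A the inequality f(x) ≤ D₊f(0)·x holds (interpreted in [0,∞], so that the inequality is automatic when D₊f(0) = ∞; in particular, if D₊f(0) < ∞ then f(x) ≤ D₊f(0)·x as real numbers for all x ∈ A). -/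
open Filter

/-!
For positive `x, y ∈ A` and `n = ⌈x / y⌉`, subadditivity applied to `n` copies of `y` gives
`f x ≤ n f y ≤ (x + y) f y / y`. As `y → 0⁺` along `A`, the lower bound `f x / (x + y)` of
`f y / y` tends to `f x / x`, so `f x / x` is at most the lower Dini derivative at `0`.
-/

open Topology

namespace GenSubadditive

variable {f : ℝ → ℝ} {A : Set ℝ} {x y : ℝ}

theorem le_nat_mul (hsub : GenSubadditive f A) (hx : x ∈ A) (hy : y ∈ A) {n : ℕ} (hn : n ≠ 0)
    (hxy : x ≤ n * y) : f x ≤ n * f y := by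
  have h := hsub x hx (List.replicate n y) (by simpa using hn)
    (fun z hz => List.eq_of_mem_replicate hz ▸ hy) (by simpa using hxy)
  simpa using h

theorem ofReal_div_add_le (hsub : GenSubadditive f A) (hx : x ∈ A) (hx0 : 0 < x) (hy : y ∈ A)
    (hy0 : 0 < y) : ENNReal.ofReal (f x / (x + y)) ≤ ENNReal.ofReal (f y / y) := by
  set n := ⌈x / y⌉₊
  have hfx : f x ≤ n * f y :=
    hsub.le_nat_mul hx hy (Nat.ceil_pos.mpr (by positivity)).ne'
      ((div_le_iff₀ hy0).mp (Nat.le_ceil _))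
  rw [ENNReal.ofReal_le_ofReal_iff']
  rcases le_or_gt (f y) 0 with hfy | hfy
  · right
    exact div_nonpos_of_nonpos_of_nonneg
      (hfx.trans (mul_nonpos_of_nonneg_of_nonpos n.cast_nonneg hfy)) (by positivity)
  · left
    have hn : (n : ℝ) ≤ (x + y) / y := by
      rw [add_div, div_self hy0.ne']
      exact (Nat.ceil_lt_add_one (by positivity)).le
    calc f x / (x + y) ≤ (x + y) / y * f y / (x + y) := by
          gcongr
          exact hfx.trans (mul_le_mul_of_nonneg_right hn hfy.le)
      _ = f y / y := by field_simp

theorem ofReal_div_le_diniLower (hsub : GenSubadditive f A) (hf0 : f 0 = 0) (hx : x ∈ A)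
    (hx0 : 0 < x) : ENNReal.ofReal (f x / x) ≤ diniLower f A 0 := by
  rcases (𝓝[A ∩ Set.Ioi 0] (0 : ℝ)).eq_or_neBot with hbot | hne
  · simp [diniLower, hbot]
  have hlim : Tendsto (fun y => ENNReal.ofReal (f x / (x + y))) (𝓝[A ∩ Set.Ioi 0] 0)
      (𝓝 (ENNReal.ofReal (f x / x))) := by
    refine (ENNReal.continuous_ofReal.tendsto _).comp (tendsto_nhdsWithin_of_tendsto_nhds ?_)
    have h : Tendsto (fun y => f x / (x + y)) (𝓝 0) (𝓝 (f x / (x + 0))) :=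
      tendsto_const_nhds.div (tendsto_const_nhds.add tendsto_id) (by simpa using hx0.ne')
    simpa using h
  rw [← hlim.liminf_eq, diniLower]
  refine liminf_le_liminf (eventually_nhdsWithin_of_forall fun y ⟨hy, hy0⟩ => ?_)
  simpa [hf0] using hsub.ofReal_div_add_le hx hx0 hy hy0

end GenSubadditive

theorem stmt18_general (A : Set ℝ) (hA : A ⊆ Set.Ici 0) (f : ℝ → ℝ)
    (hsub : GenSubadditive f A) (hf0 : f 0 = 0) :
    ∀ x ∈ A, ENNReal.ofReal (f x) ≤ diniLower f A 0 * ENNReal.ofReal x := by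
  intro x hx
  rcases (Set.mem_Ici.mp (hA hx)).eq_or_lt with rfl | hx0
  · simp [hf0]
  calc ENNReal.ofReal (f x) = ENNReal.ofReal (f x / x) * ENNReal.ofReal x := by
        rw [← ENNReal.ofReal_mul' hx0.le, div_mul_cancel₀ _ hx0.ne']
    _ ≤ diniLower f A 0 * ENNReal.ofReal x := by
        gcongr
        exact hsub.ofReal_div_le_diniLower hf0 hx hx0

theorem stmt18 (A : Set ℝ) (hA : A ⊆ Set.Ici 0) (f : ℝ → ℝ)
    (hfnonneg : ∀ x ∈ A, 0 ≤ f x)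
    (hsub : GenSubadditive f A)
    (h0 : (0 : ℝ) ∈ A) (hacc : AccPt (0 : ℝ) (𝓟 A)) (hf0 : f 0 = 0) :
    ∀ x ∈ A, ENNReal.ofReal (f x) ≤ diniLower f A 0 * ENNReal.ofReal x :=
  stmt18_general A hA f hsub hf0
end

section
/- Let (X,d_X) and (Y,d_Y) be geodesic metric spaces and let Φ : X → Y be a weak similarity. Then Φ is a similarity: there exists r > 0 such that d_Y(Φ(x),Φ(y)) = r·d_X(x,y) for all x, y ∈ X. Moreover, if X and Y are bounded with diam X > 0 and diam Y > 0, then the ratio r equals (diam Y)/(diam X). -/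
/-- A metric space is geodesic if any two distinct points are joined by a geodesic path. -/
def IsGeodesicSpace (X : Type*) [MetricSpace X] : Prop :=
  ∀ x y : X, x ≠ y → ∃ (a b : ℝ) (γ : ℝ → X), a < b ∧ γ a = x ∧ γ b = y ∧
    ∀ t₁ ∈ Set.Icc a b, ∀ t₂ ∈ Set.Icc a b, dist (γ t₁) (γ t₂) = |t₂ - t₁|

lemma geo_interval {X : Type*} [MetricSpace X] (hX : IsGeodesicSpace X)
    {s : ℝ} (hs : s ∈ distSetM X) {t : ℝ} (ht0 : 0 ≤ t) (hts : t ≤ s) :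
    t ∈ distSetM X := by
  obtain ⟨u, v, huv⟩ := hs
  rcases eq_or_ne u v with rfl | hne
  · refine ⟨u, u, ?_⟩
    rw [dist_self] at huv ⊢
    linarith
  · obtain ⟨a, b, γ, hab, hga, hgb, hiso⟩ := hX u v hne
    have hba : s = b - a := by
      have h := hiso a ⟨le_rfl, hab.le⟩ b ⟨hab.le, le_rfl⟩
      rw [hga, hgb, huv, abs_of_pos (by linarith)] at h
      exact h
    refine ⟨u, γ (a + t), ?_⟩
    have h := hiso a ⟨le_rfl, hab.le⟩ (a + t) ⟨by linarith, by linarith⟩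
    rw [hga, show a + t - a = t by ring, abs_of_nonneg ht0] at h
    exact h

theorem stmt19 {X Y : Type*} [MetricSpace X] [MetricSpace Y]
    (hX : IsGeodesicSpace X) (hY : IsGeodesicSpace Y)
    (Φ : X → Y) (f : ℝ → ℝ)
    (hsurj : Function.Surjective Φ)
    (hmono : StrictMonoOn f (distSetM Y))
    (hmaps : Set.MapsTo f (distSetM Y) (distSetM X))
    (heq : ∀ x y : X, dist x y = f (dist (Φ x) (Φ y))) :
    ∃ r : ℝ, 0 < r ∧ (∀ x y : X, dist (Φ x) (Φ y) = r * dist x y) ∧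
      ((Bornology.IsBounded (Set.univ : Set X) ∧ Bornology.IsBounded (Set.univ : Set Y) ∧
          0 < Metric.diam (Set.univ : Set X) ∧ 0 < Metric.diam (Set.univ : Set Y)) →
        r = Metric.diam (Set.univ : Set Y) / Metric.diam (Set.univ : Set X)) := by
  classical
  by_cases hsub : ∀ x y : X, x = y
  · refine ⟨1, one_pos, fun x y => by rw [hsub x y, dist_self, dist_self, mul_zero], ?_⟩
    rintro ⟨-, -, -, hdY⟩
    exfalso
    have hYsub : (Set.univ : Set Y).Subsingleton := by
      intro u _ v _
      obtain ⟨x, rfl⟩ := hsurj u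
      obtain ⟨y, rfl⟩ := hsurj v
      rw [hsub x y]
    rw [Metric.diam_subsingleton hYsub] at hdY
    exact lt_irrefl _ hdY
  push_neg at hsub
  obtain ⟨x₀, y₀, hxy⟩ := hsub
  have hf0 : f 0 = 0 := by
    have h := heq x₀ x₀
    rwa [dist_self, dist_self, eq_comm] at h
  have hmemD : ∀ x y : X, dist (Φ x) (Φ y) ∈ distSetM Y := fun x y => ⟨_, _, rfl⟩
  have h0D : (0 : ℝ) ∈ distSetM Y := ⟨Φ x₀, Φ x₀, dist_self _⟩
  have hDnn : ∀ t ∈ distSetM Y, (0:ℝ) ≤ t := by rintro t ⟨u, v, rfl⟩; exact dist_nonneg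
  have monoD : MonotoneOn f (distSetM Y) := hmono.monotoneOn
  have hinj : Set.InjOn f (distSetM Y) := hmono.injOn
  have hfnn : ∀ t ∈ distSetM Y, 0 ≤ f t := fun t ht => hf0 ▸ monoD h0D ht (hDnn t ht)
  have hΦne : Φ x₀ ≠ Φ y₀ := by
    intro h
    apply hxy
    have h2 := heq x₀ y₀
    rw [h, dist_self, hf0] at h2
    exact dist_eq_zero.mp h2
  set s₀ := dist (Φ x₀) (Φ y₀) with hs₀def
  have hs₀pos : 0 < s₀ := dist_pos.mpr hΦne
  have hs₀D : s₀ ∈ distSetM Y := hmemD x₀ y₀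
  -- additivity of f on the distance set of Y
  have hadd : ∀ s t : ℝ, 0 ≤ s → 0 ≤ t → s + t ∈ distSetM Y → f (s + t) = f s + f t := by
    intro s t hs ht hst
    have hsD : s ∈ distSetM Y := geo_interval hY hst hs (by linarith)
    have htD : t ∈ distSetM Y := geo_interval hY hst ht (by linarith)
    rcases eq_or_lt_of_le (show (0:ℝ) ≤ s + t by linarith) with h0 | h0
    · have hs0 : s = 0 := by linarith
      have ht0 : t = 0 := by linarith
      rw [hs0, ht0]
      simp [hf0]
    obtain ⟨u, v, huv⟩ := hst
    have hstD : s + t ∈ distSetM Y := ⟨u, v, huv⟩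
    have hune : u ≠ v := by
      intro h; rw [h, dist_self] at huv; linarith
    obtain ⟨a, b, γ, hab, hga, hgb, hiso⟩ := hY u v hune
    have hba : b - a = s + t := by
      have h := hiso a ⟨le_rfl, hab.le⟩ b ⟨hab.le, le_rfl⟩
      rw [hga, hgb, huv, abs_of_pos (by linarith)] at h
      linarith
    have hmemab : a + s ∈ Set.Icc a b := ⟨by linarith, by linarith⟩
    have hd1 : dist u (γ (a + s)) = s := by
      have h := hiso a ⟨le_rfl, hab.le⟩ (a + s) hmemab
      rw [hga, show a + s - a = s by ring, abs_of_nonneg hs] at h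
      exact h
    have hd2 : dist (γ (a + s)) v = t := by
      have h := hiso (a + s) hmemab b ⟨hab.le, le_rfl⟩
      rw [hgb, show b - (a + s) = t by linarith, abs_of_nonneg ht] at h
      exact h
    obtain ⟨x, hx⟩ := hsurj u
    obtain ⟨y, hy⟩ := hsurj v
    obtain ⟨m, hm⟩ := hsurj (γ (a + s))
    have exy : dist x y = f (s + t) := by rw [heq x y, hx, hy, huv]
    have exm : dist x m = f s := by rw [heq x m, hx, hm, hd1]
    have emy : dist m y = f t := by rw [heq m y, hm, hy, hd2]
    have hle : f (s + t) ≤ f s + f t := by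
      rw [← exy, ← exm, ← emy]
      exact dist_triangle x m y
    have hfs0 : 0 ≤ f s := hfnn s hsD
    have hft0 : 0 ≤ f t := hfnn t htD
    have hfst : f s ≤ f (s + t) := monoD hsD hstD (by linarith)
    have hftt : f t ≤ f (s + t) := monoD htD hstD (by linarith)
    have hge : f s + f t ≤ f (s + t) := by
      rcases eq_or_ne x y with rfl | hxy'
      · have h1 : f (s + t) = 0 := by rw [← exy, dist_self]
        rw [h1] at hfst hftt
        rw [h1]
        linarith
      · obtain ⟨a', b', γ', hab', hga', hgb', hiso'⟩ := hX x y hxy'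
        have hba' : b' - a' = f (s + t) := by
          have h := hiso' a' ⟨le_rfl, hab'.le⟩ b' ⟨hab'.le, le_rfl⟩
          rw [hga', hgb', exy, abs_of_pos (by linarith)] at h
          linarith
        have hmem' : a' + f s ∈ Set.Icc a' b' := ⟨by linarith, by linarith⟩
        have hd1' : dist x (γ' (a' + f s)) = f s := by
          have h := hiso' a' ⟨le_rfl, hab'.le⟩ (a' + f s) hmem'
          rw [hga', show a' + f s - a' = f s by ring, abs_of_nonneg hfs0] at h
          exact h
        have hd2' : dist (γ' (a' + f s)) y = f (s + t) - f s := by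
          have h := hiso' (a' + f s) hmem' b' ⟨hab'.le, le_rfl⟩
          rw [hgb', show b' - (a' + f s) = f (s + t) - f s by linarith,
            abs_of_nonneg (by linarith)] at h
          exact h
        set m' := γ' (a' + f s) with hm'def
        have hΦxm : dist (Φ x) (Φ m') = s := by
          apply hinj (hmemD x m') hsD
          rw [← heq x m', hd1']
        have htri : t ≤ dist (Φ m') (Φ y) := by
          have hxyd : dist (Φ x) (Φ y) = s + t := by rw [hx, hy]; exact huv
          have h := dist_triangle (Φ x) (Φ m') (Φ y)
          rw [hΦxm, hxyd] at h
          linarith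
        have hfty : f t ≤ f (dist (Φ m') (Φ y)) := monoD htD (hmemD m' y) htri
        rw [← heq m' y, hd2'] at hfty
        linarith
    linarith
  -- f of natural multiples
  have hnat : ∀ (n : ℕ) (t : ℝ), 0 ≤ t → (n : ℝ) * t ∈ distSetM Y →
      f ((n : ℝ) * t) = (n : ℝ) * f t := by
    intro n
    induction n with
    | zero => intro t _ _; simp [hf0]
    | succ n ih =>
      intro t ht hmem
      have hcast : ((n + 1 : ℕ) : ℝ) = (n : ℝ) + 1 := by push_cast; ring
      have h1 : (n : ℝ) * t ≤ ((n + 1 : ℕ) : ℝ) * t := by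
        rw [hcast]; nlinarith
      have hmem' : (n : ℝ) * t ∈ distSetM Y := geo_interval hY hmem (by positivity) h1
      have h2 : ((n + 1 : ℕ) : ℝ) * t = (n : ℝ) * t + t := by rw [hcast]; ring
      rw [h2, hadd ((n : ℝ) * t) t (by positivity) ht (h2 ▸ hmem), ih t ht hmem', hcast]
      ring
  -- f of rational multiples
  have hfrac : ∀ s ∈ distSetM Y, ∀ m n : ℕ, 0 < n → (m : ℝ) ≤ (n : ℝ) →
      (n : ℝ) * f ((m : ℝ) / (n : ℝ) * s) = (m : ℝ) * f s := by
    intro s hsD m n hn hmn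
    have hs0 : 0 ≤ s := hDnn s hsD
    have hn0 : (0 : ℝ) < (n : ℝ) := by exact_mod_cast hn
    have hts : (n : ℝ) * (s / n) = s := by field_simp
    have h1 : f s = (n : ℝ) * f (s / n) := by
      have h := hnat n (s / n) (by positivity) (by rw [hts]; exact hsD)
      rw [hts] at h
      exact h
    have hle : (m : ℝ) * (s / n) ≤ s := by
      calc (m : ℝ) * (s / n) ≤ (n : ℝ) * (s / n) :=
            mul_le_mul_of_nonneg_right hmn (by positivity)
        _ = s := hts
    have hmemm : (m : ℝ) * (s / n) ∈ distSetM Y := geo_interval hY hsD (by positivity) hle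
    have h2 : f ((m : ℝ) * (s / n)) = (m : ℝ) * f (s / n) := hnat m (s / n) (by positivity) hmemm
    have h3 : (m : ℝ) / (n : ℝ) * s = (m : ℝ) * (s / n) := by ring
    rw [h3, h2, h1]
    ring
  -- lower linear bound
  have hlow : ∀ s ∈ distSetM Y, 0 < s → ∀ t, 0 ≤ t → t ≤ s → t * f s ≤ s * f t := by
    intro s hsD hspos t ht0 hts
    have hfs : 0 ≤ f s := hfnn s hsD
    have htD : t ∈ distSetM Y := geo_interval hY hsD ht0 hts
    have hft : 0 ≤ f t := hfnn t htD
    refine le_of_forall_pos_le_add ?_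
    intro ε hε
    obtain ⟨n, hn⟩ := exists_nat_gt (s * f s / ε)
    have hn0 : (0 : ℝ) < (n : ℝ) := lt_of_le_of_lt (by positivity) hn
    set m := ⌊(n : ℝ) * t / s⌋₊ with hmdef
    have hm1 : (m : ℝ) ≤ (n : ℝ) * t / s := Nat.floor_le (by positivity)
    have hm2 : (n : ℝ) * t / s < (m : ℝ) + 1 := Nat.lt_floor_add_one _
    have hmn : (m : ℝ) ≤ (n : ℝ) := by
      have h : (n : ℝ) * t / s ≤ (n : ℝ) := by
        rw [div_le_iff₀ hspos]; nlinarith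
      linarith
    have hms : (m : ℝ) / (n : ℝ) * s ≤ t := by
      rw [div_mul_eq_mul_div, div_le_iff₀ hn0]
      have h := (le_div_iff₀ hspos).mp hm1
      nlinarith
    have hmsD : (m : ℝ) / (n : ℝ) * s ∈ distSetM Y :=
      geo_interval hY hsD (by positivity) (by linarith)
    have key : (n : ℝ) * f ((m : ℝ) / (n : ℝ) * s) = (m : ℝ) * f s := hfrac s hsD m n
      (by exact_mod_cast hn0) hmn
    have hmono1 : f ((m : ℝ) / (n : ℝ) * s) ≤ f t := monoD hmsD htD hms
    have h5 : (m : ℝ) * f s ≤ (n : ℝ) * f t := by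
      rw [← key]
      exact mul_le_mul_of_nonneg_left hmono1 hn0.le
    have h6' : (n : ℝ) * t < ((m : ℝ) + 1) * s := (div_lt_iff₀ hspos).mp hm2
    have h6 : (n : ℝ) * (t * f s) ≤ (m : ℝ) * s * f s + s * f s := by
      nlinarith [mul_le_mul_of_nonneg_right h6'.le hfs]
    have h7 : s * f s < (n : ℝ) * ε := by
      rw [div_lt_iff₀ hε] at hn
      linarith
    nlinarith [mul_le_mul_of_nonneg_right h5 hspos.le]
  -- exact linearity
  have hlin : ∀ s ∈ distSetM Y, 0 < s → ∀ t, 0 ≤ t → t ≤ s → s * f t = t * f s := by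
    intro s hsD hspos t ht0 hts
    have h1 := hlow s hsD hspos t ht0 hts
    have h2 := hlow s hsD hspos (s - t) (by linarith) (by linarith)
    have h3 : f s = f t + f (s - t) := by
      have h := hadd t (s - t) ht0 (by linarith) (by rw [show t + (s - t) = s by ring]; exact hsD)
      rw [show t + (s - t) = s by ring] at h
      linarith
    have hst : f (s - t) = f s - f t := by linarith
    have h4 : s * f (s - t) = s * f s - s * f t := by rw [hst]; ring
    nlinarith [h1, h2, h4]
  have hfs₀pos : 0 < f s₀ := by
    have h := hmono h0D hs₀D hs₀pos
    rwa [hf0] at h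
  set r := s₀ / f s₀ with hrdef
  have hrpos : 0 < r := by positivity
  have hsim : ∀ x y : X, dist (Φ x) (Φ y) = r * dist x y := by
    intro x y
    have hu : dist (Φ x) (Φ y) ∈ distSetM Y := hmemD x y
    have h1 : s₀ * f (dist (Φ x) (Φ y)) = dist (Φ x) (Φ y) * f s₀ := by
      rcases le_total (dist (Φ x) (Φ y)) s₀ with h | h
      · exact hlin s₀ hs₀D hs₀pos _ dist_nonneg h
      · exact (hlin _ hu (lt_of_lt_of_le hs₀pos h) s₀ hs₀pos.le h).symm
    rw [← heq x y] at h1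
    rw [hrdef]
    field_simp
    linarith
  refine ⟨r, hrpos, hsim, ?_⟩
  rintro ⟨hbX, hbY, hdX, hdY⟩
  have h1 : Metric.diam (Set.univ : Set Y) ≤ r * Metric.diam (Set.univ : Set X) := by
    apply Metric.diam_le_of_forall_dist_le
      (mul_nonneg hrpos.le Metric.diam_nonneg)
    intro u _ v _
    obtain ⟨x, rfl⟩ := hsurj u
    obtain ⟨y, rfl⟩ := hsurj v
    rw [hsim x y]
    exact mul_le_mul_of_nonneg_left (Metric.dist_le_diam_of_mem hbX trivial trivial) hrpos.le
  have h2 : Metric.diam (Set.univ : Set X) ≤ Metric.diam (Set.univ : Set Y) / r := by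
    apply Metric.diam_le_of_forall_dist_le (by positivity)
    intro x _ y _
    rw [le_div_iff₀ hrpos]
    calc dist x y * r = dist (Φ x) (Φ y) := by rw [hsim x y]; ring
      _ ≤ _ := Metric.dist_le_diam_of_mem hbY trivial trivial
  rw [eq_div_iff (ne_of_gt hdX)]
  rw [le_div_iff₀ hrpos] at h2
  linarith
end
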